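/- arXiv:1809.04965 — 4 statements merged into one kernel-verified Lean document; each statement's English description precedes it below -/
import Mathlib

section
/- The crystal lowering operator f̃_i, when defined (i.e., not sending T to 0), strictly increases exactly one entry of a semistandard tableau by 1 (changing an i to an i+1), and the result is again a semistandard tableau of the same shape; moreover f̃_i and ẽ_i are inverse where defined: if f̃_i(T) ≠ 0 then ẽ_i(f̃_i(T)) = T. -/
/-- `T` is a semistandard Young tableau of rectangular shape with `k` rows and `d`
columns, with entries in `{1,…,n}`. -/
def IsSSYT (k d n : ℕ) (T : ℕ → ℕ → ℕ) : Prop :=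
  (∀ r c, r < k → c < d → 1 ≤ T r c ∧ T r c ≤ n) ∧
  (∀ r c, r < k → c + 1 < d → T r c ≤ T r (c + 1)) ∧
  (∀ r c, r + 1 < k → c < d → T r c < T (r + 1) c)

/-- The row word of a rectangular tableau with `k` rows and `d` columns: rows are read
left to right, starting from the bottom row.  Position `p` (for `p < k*d`) is the
entry in row `k - 1 - p / d` and column `p % d`. -/
def rowWord (k d : ℕ) (T : ℕ → ℕ → ℕ) (p : ℕ) : ℕ :=
  T (k - 1 - p / d) (p % d)

/-- In the parenthesis pairing for `f̃_i`/`ẽ_i` (each `i` is `)` and each `i+1` is `(`),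
`sCnt` at position `p` is the number of `)`'s minus the number of `('`s among positions
`≤ p` of the row word. -/
def sCnt (k d i : ℕ) (T : ℕ → ℕ → ℕ) (p : ℕ) : ℤ :=
  (((Finset.range (p + 1)).filter fun q => rowWord k d T q = i).card : ℤ) -
  (((Finset.range (p + 1)).filter fun q => rowWord k d T q = i + 1).card : ℤ)

/-- `tCnt` at position `q` is the number of `('`s minus the number of `)`'s among
positions `≥ q` (and `< k*d`) of the row word. -/
def tCnt (k d i : ℕ) (T : ℕ → ℕ → ℕ) (q : ℕ) : ℤ :=
  (((Finset.Ico q (k * d)).filter fun p => rowWord k d T p = i + 1).card : ℤ) -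
  (((Finset.Ico q (k * d)).filter fun p => rowWord k d T p = i).card : ℤ)

/-- `p` is the position of the rightmost unpaired `)` (letter `i`) in the row word:
the first position at which the running excess of `)`'s over `('`s attains its
(positive) maximum. -/
def fCond (k d i : ℕ) (T : ℕ → ℕ → ℕ) (p : ℕ) : Prop :=
  p < k * d ∧ rowWord k d T p = i ∧ 0 < sCnt k d i T p ∧
  (∀ q, q < k * d → sCnt k d i T q ≤ sCnt k d i T p) ∧
  (∀ q, q < p → sCnt k d i T q < sCnt k d i T p)

/-- `q` is the position of the leftmost unpaired `(` (letter `i+1`) in the row word: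
the last position at which the right-to-left excess of `('`s over `)`'s attains its
(positive) maximum. -/
def eCond (k d i : ℕ) (T : ℕ → ℕ → ℕ) (q : ℕ) : Prop :=
  q < k * d ∧ rowWord k d T q = i + 1 ∧ 0 < tCnt k d i T q ∧
  (∀ p, p < k * d → tCnt k d i T p ≤ tCnt k d i T q) ∧
  (∀ p, q < p → p < k * d → tCnt k d i T p < tCnt k d i T q)

open Classical in
/-- The crystal lowering operator `f̃_i`: change the `i` corresponding to the rightmost
unpaired `)` in the row word into an `i+1`; if there is no such `)`, return `none`
(i.e. `0`). -/
noncomputable def ftilde (k d i : ℕ) (T : ℕ → ℕ → ℕ) : Option (ℕ → ℕ → ℕ) :=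
  if h : ∃ p, fCond k d i T p then
    some (fun r c =>
      if r = k - 1 - h.choose / d ∧ c = h.choose % d then i + 1 else T r c)
  else none

open Classical in
/-- The crystal raising operator `ẽ_i`: change the `i+1` corresponding to the leftmost
unpaired `(` in the row word into an `i`; if there is no such `(`, return `none`. -/
noncomputable def etilde (k d i : ℕ) (T : ℕ → ℕ → ℕ) : Option (ℕ → ℕ → ℕ) :=
  if h : ∃ q, eCond k d i T q then
    some (fun r c =>
      if r = k - 1 - h.choose / d ∧ c = h.choose % d then i else T r c)
  else none

/-! Let `H q` be the excess of letters `i` over letters `i + 1` among the first `q` letters of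
the row word; `f̃ᵢ` acts at the first position `p` where `H (p + 1)` attains its maximum.
The entry right of `p` is not another `i`, or `H` would climb higher. The entry below `p` is
not `i + 1` either: otherwise the `i`'s of `p`'s row up to `p` sit above a run of `i + 1`'s,
only letters other than `i` are read between the two runs, so they cancel and `H` reached
its maximum before `p`. Hence raising the entry keeps the tableau semistandard. Raising it
lowers `H` by `2` after `p`, which makes `p` the last position where the right-to-left excess
of `i + 1` over `i` is maximal, i.e. the position where `ẽᵢ` acts. -/

open Finset

def bracketStep (i v : ℕ) : ℤ := (if v = i then 1 else 0) - (if v = i + 1 then 1 else 0)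

def bracketHeight (w : ℕ → ℕ) (i q : ℕ) : ℤ := ∑ p ∈ range q, bracketStep i (w p)

section BracketHeight

variable (w : ℕ → ℕ) (i : ℕ)

@[simp] lemma bracketStep_self : bracketStep i i = 1 := by simp [bracketStep]

@[simp] lemma bracketStep_succ_self : bracketStep i (i + 1) = -1 := by simp [bracketStep]

lemma bracketStep_nonpos {v : ℕ} (h : v ≠ i) : bracketStep i v ≤ 0 := by
  unfold bracketStep
  split_ifs <;> simp_all

@[simp] lemma bracketHeight_zero : bracketHeight w i 0 = 0 := by simp [bracketHeight]

lemma bracketHeight_succ (q : ℕ) :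
    bracketHeight w i (q + 1) = bracketHeight w i q + bracketStep i (w q) :=
  sum_range_succ _ _

lemma bracketHeight_add_of_forall_eq {a m v : ℕ} (h : ∀ j < m, w (a + j) = v) :
    bracketHeight w i (a + m) = bracketHeight w i a + m * bracketStep i v := by
  induction m with
  | zero => simp
  | succ m ih =>
    rw [← add_assoc, bracketHeight_succ, ih fun j hj => h j (by omega), h m (by omega)]
    push_cast
    ring

lemma bracketHeight_le_of_forall_ne {a b : ℕ} (hab : a ≤ b)
    (h : ∀ p, a ≤ p → p < b → w p ≠ i) : bracketHeight w i b ≤ bracketHeight w i a := by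
  induction b, hab using Nat.le_induction with
  | base => rfl
  | succ b hab ih =>
    rw [bracketHeight_succ]
    linarith [ih fun p hp hpb => h p hp (by omega), bracketStep_nonpos i (h b hab (by omega))]

lemma bracketHeight_le_of_matched_runs {a b m : ℕ} (hab : a + m ≤ b)
    (hopen : ∀ j < m, w (a + j) = i + 1) (hgap : ∀ p, a + m ≤ p → p < b → w p ≠ i)
    (hclose : ∀ j < m, w (b + j) = i) :
    bracketHeight w i (b + m) ≤ bracketHeight w i a := by
  rw [bracketHeight_add_of_forall_eq w i hclose]
  have := bracketHeight_add_of_forall_eq w i hopen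
  have := bracketHeight_le_of_forall_ne w i hab hgap
  simp only [bracketStep_self, bracketStep_succ_self] at *
  linarith

lemma bracketHeight_of_eq_ite {w' : ℕ → ℕ} {N p : ℕ} (hwp : w p = i)
    (hw' : ∀ q < N, w' q = if q = p then i + 1 else w q) {q : ℕ} (hq : q ≤ N) :
    bracketHeight w' i q = bracketHeight w i q - if p < q then 2 else 0 := by
  induction q with
  | zero => simp
  | succ q ih =>
    rw [bracketHeight_succ, bracketHeight_succ, ih (by omega), hw' q (by omega)]
    rcases lt_trichotomy q p with hlt | rfl | hgt
    · simp [hlt.ne, hlt.not_gt, Nat.not_lt.2 hlt]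
    · simp only [hwp, lt_irrefl, Nat.lt_succ_self, if_true, if_false, bracketStep_self,
        bracketStep_succ_self]
      ring
    · simp only [hgt.ne', hgt, hgt.trans (Nat.lt_succ_self q), if_true, if_false]
      ring

end BracketHeight

section RowWord

variable {k d i : ℕ} {T : ℕ → ℕ → ℕ}

lemma sCnt_eq_bracketHeight (p : ℕ) :
    sCnt k d i T p = bracketHeight (rowWord k d T) i (p + 1) := by
  simp only [sCnt, bracketHeight, bracketStep, sum_sub_distrib, card_filter]
  push_cast
  rfl

lemma tCnt_eq_bracketHeight {q : ℕ} (hq : q ≤ k * d) :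
    tCnt k d i T q =
      bracketHeight (rowWord k d T) i q - bracketHeight (rowWord k d T) i (k * d) := by
  rw [← neg_sub, bracketHeight, bracketHeight, ← sum_Ico_eq_sub _ hq]
  simp only [bracketStep, sum_sub_distrib, tCnt, card_filter]
  push_cast
  ring

namespace fCond

variable {p : ℕ}

lemma bracketHeight_le (hp : fCond k d i T p) {q : ℕ} (hq : q ≤ k * d) :
    bracketHeight (rowWord k d T) i q ≤ bracketHeight (rowWord k d T) i (p + 1) := by
  rw [← sCnt_eq_bracketHeight]
  cases q with
  | zero => simpa using hp.2.2.1.le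
  | succ q => simpa [sCnt_eq_bracketHeight] using hp.2.2.2.1 q (by omega)

lemma bracketHeight_lt (hp : fCond k d i T p) {q : ℕ} (hq : q ≤ p) :
    bracketHeight (rowWord k d T) i q < bracketHeight (rowWord k d T) i (p + 1) := by
  rw [← sCnt_eq_bracketHeight]
  cases q with
  | zero => simpa using hp.2.2.1
  | succ q => simpa [sCnt_eq_bracketHeight] using hp.2.2.2.2 q (by omega)

lemma bracketHeight_succ (hp : fCond k d i T p) :
    bracketHeight (rowWord k d T) i (p + 1) = bracketHeight (rowWord k d T) i p + 1 := by
  rw [_root_.bracketHeight_succ, hp.2.1, bracketStep_self]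

lemma rowWord_succ_ne (hp : fCond k d i T p) (h : p + 1 < k * d) :
    rowWord k d T (p + 1) ≠ i := by
  intro hi
  have := hp.bracketHeight_le (q := p + 2) h
  rw [_root_.bracketHeight_succ, hi, bracketStep_self] at this
  linarith

end fCond

end RowWord

def setCell (T : ℕ → ℕ → ℕ) (r c v : ℕ) : ℕ → ℕ → ℕ :=
  fun r' c' => if r' = r ∧ c' = c then v else T r' c'

lemma setCell_setCell (T : ℕ → ℕ → ℕ) (r c v v' : ℕ) :
    setCell (setCell T r c v) r c v' = setCell T r c v' := by
  funext r' c'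
  simp only [setCell]
  split_ifs <;> rfl

lemma setCell_eq_self {T : ℕ → ℕ → ℕ} {r c : ℕ} :
    setCell T r c (T r c) = T := by
  funext r' c'
  simp only [setCell]
  split_ifs with h
  · rw [h.1, h.2]
  · rfl

section Operators

variable {k d i : ℕ} {T : ℕ → ℕ → ℕ}

lemma exists_fCond_of_ftilde_eq_some {T' : ℕ → ℕ → ℕ} (h : ftilde k d i T = some T') :
    ∃ p, fCond k d i T p ∧ T' = setCell T (k - 1 - p / d) (p % d) (i + 1) := by
  unfold ftilde at h
  split_ifs at h with hex
  exact ⟨_, hex.choose_spec, (Option.some_inj.mp h).symm⟩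

lemma eCond_unique {q q' : ℕ} (hq : eCond k d i T q) (hq' : eCond k d i T q') : q = q' := by
  by_contra hne
  rcases Nat.lt_or_gt_of_ne hne with hlt | hlt
  · linarith [hq.2.2.2.2 q' hlt hq'.1, hq'.2.2.2.1 q hq.1]
  · linarith [hq'.2.2.2.2 q hlt hq.1, hq.2.2.2.1 q' hq'.1]

lemma etilde_eq_of_eCond {q : ℕ} (hq : eCond k d i T q) :
    etilde k d i T = some (setCell T (k - 1 - q / d) (q % d) i) := by
  have hex : ∃ q, eCond k d i T q := ⟨q, hq⟩
  rw [etilde, dif_pos hex, eCond_unique hex.choose_spec hq]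
  rfl

end Operators

section Positions

variable {k d : ℕ} {T : ℕ → ℕ → ℕ}

lemma Nat.div_lt_of_lt_mul' {p : ℕ} (hp : p < k * d) : p / d < k :=
  Nat.div_lt_of_lt_mul (by rwa [mul_comm])

lemma rowWord_mul_add {m c : ℕ} (hc : c < d) :
    rowWord k d T (d * m + c) = T (k - 1 - m) c := by
  have hd : 0 < d := by omega
  rw [rowWord, Nat.mul_add_div hd, Nat.div_eq_of_lt hc, Nat.mul_add_mod, Nat.mod_eq_of_lt hc,
    add_zero]

lemma rowWord_setCell {p q v : ℕ} (hp : p < k * d) (hq : q < k * d) :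
    rowWord k d (setCell T (k - 1 - p / d) (p % d) v) q =
      if q = p then v else rowWord k d T q := by
  have hpk := Nat.div_lt_of_lt_mul' hp
  have hqk := Nat.div_lt_of_lt_mul' hq
  simp only [rowWord, setCell]
  refine if_congr ⟨fun h => ?_, fun h => by rw [h]; exact ⟨rfl, rfl⟩⟩ rfl rfl
  rw [← Nat.div_add_mod q d, ← Nat.div_add_mod p d, h.2, show q / d = p / d by omega]

end Positions

namespace IsSSYT

variable {k d n : ℕ} {T : ℕ → ℕ → ℕ}

lemma row_mono (hT : IsSSYT k d n T) {r c c' : ℕ} (hr : r < k) (hcc' : c ≤ c') (hc' : c' < d) :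
    T r c ≤ T r c' := by
  induction c', hcc' using Nat.le_induction with
  | base => rfl
  | succ c' _ ih => exact (ih (by omega)).trans (hT.2.1 r c' hr hc')

lemma setCell_succ (hT : IsSSYT k d n T) {r c i : ℕ} (hTrc : T r c = i) (hin : i < n)
    (hright : c + 1 < d → T r (c + 1) ≠ i) (hbelow : r + 1 < k → T (r + 1) c ≠ i + 1) :
    IsSSYT k d n (setCell T r c (i + 1)) := by
  obtain ⟨hbound, hrow, hcol⟩ := hT
  refine ⟨fun r' c' hr' hc' => ?_, fun r' c' hr' hc' => ?_, fun r' c' hr' hc' => ?_⟩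
  · have := hbound r' c' hr' hc'
    simp only [setCell]
    split_ifs <;> omega
  · have := hrow r' c' hr' hc'
    simp only [setCell]
    split_ifs with h1 h2 h2 <;> grind
  · have := hcol r' c' hr' hc'
    simp only [setCell]
    split_ifs with h1 h2 h2 <;> grind

lemma exists_run (hT : IsSSYT k d n T) {r c i : ℕ} (hr : r + 1 < k) (hc : c < d)
    (hTrc : T r c = i) (hbelow : T (r + 1) c = i + 1) :
    ∃ c₀ ≤ c, (∀ c' < c₀, T r c' < i) ∧
      ∀ c', c₀ ≤ c' → c' ≤ c → T r c' = i ∧ T (r + 1) c' = i + 1 := by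
  have hex : ∃ c', i ≤ T r c' := ⟨c, hTrc.ge⟩
  refine ⟨Nat.find hex, Nat.find_min' hex hTrc.ge, fun c' hc' => not_le.1 (Nat.find_min hex hc'),
    fun c' hc₀ hcc => ?_⟩
  have h₁ : i ≤ T r (Nat.find hex) := Nat.find_spec hex
  have h₂ := hT.row_mono (r := r) (by omega) hc₀ (by omega)
  have h₃ := hT.row_mono (r := r) (by omega) hcc hc
  have h₄ := hT.row_mono hr hcc hc
  have h₅ := hT.2.2 r c' hr (by omega)
  omega

end IsSSYT

namespace fCond

variable {k d n i p : ℕ} {T : ℕ → ℕ → ℕ}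

lemma cols_pos (hp : fCond k d i T p) : 0 < d :=
  Nat.pos_of_mul_pos_left (lt_of_le_of_lt (Nat.zero_le p) hp.1)

lemma right_ne (hp : fCond k d i T p) (h : p % d + 1 < d) :
    T (k - 1 - p / d) (p % d + 1) ≠ i := by
  have hpk := Nat.div_lt_of_lt_mul' hp.1
  have hdiv := Nat.div_add_mod p d
  have hN : p + 1 < k * d := by nlinarith
  have := hp.rowWord_succ_ne hN
  rwa [← hdiv, add_assoc, rowWord_mul_add h] at this

lemma below_ne (hT : IsSSYT k d n T) (hp : fCond k d i T p) (h : k - 1 - p / d + 1 < k) :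
    T (k - 1 - p / d + 1) (p % d) ≠ i + 1 := by
  intro hbelow
  have hd := hp.cols_pos
  have hc : p % d < d := Nat.mod_lt p hd
  have hdiv := Nat.div_add_mod p d
  obtain ⟨m, hm⟩ : ∃ m, p / d = m + 1 := ⟨p / d - 1, by omega⟩
  obtain ⟨c₀, hc₀, hleft, hrun⟩ := hT.exists_run h hc hp.2.1 hbelow
  have hupper : ∀ c < d, rowWord k d T (d * m + c) = T (k - 1 - p / d + 1) c := by
    intro c hcd
    rw [rowWord_mul_add hcd]
    congr 1
    have := Nat.div_lt_of_lt_mul' hp.1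
    omega
  have hlower : ∀ c < d, rowWord k d T (d * m + d + c) = T (k - 1 - p / d) c := by
    intro c hcd
    rw [hm, show d * m + d + c = d * (m + 1) + c by ring, rowWord_mul_add hcd]
  have hpm : d * m + d + p % d = p := by
    rw [hm] at hdiv
    linarith
  have key := bracketHeight_le_of_matched_runs (rowWord k d T) i
    (a := d * m + c₀) (b := d * m + d + c₀) (m := p % d + 1 - c₀) (by omega)
    (fun j hj => by rw [add_assoc, hupper _ (by omega)]; exact (hrun _ (by omega) (by omega)).2)
    (fun q hq hqb => ?_)
    (fun j hj => by rw [add_assoc, hlower _ (by omega)]; exact (hrun _ (by omega) (by omega)).1)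
  · rw [show d * m + d + c₀ + (p % d + 1 - c₀) = p + 1 by omega] at key
    exact (hp.bracketHeight_lt (by omega)).not_ge key
  · rcases lt_or_ge q (d * m + d) with hq' | hq'
    · have hrow := hT.row_mono h (c := p % d) (c' := q - d * m) (by omega) (by omega)
      have hq := hupper (q - d * m) (by omega)
      rw [show d * m + (q - d * m) = q by omega] at hq
      omega
    · have hlt := hleft (q - (d * m + d)) (by omega)
      have hq := hlower (q - (d * m + d)) (by omega)
      rw [show d * m + d + (q - (d * m + d)) = q by omega] at hq
      omega

lemma eCond_setCell (hp : fCond k d i T p) :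
    eCond k d i (setCell T (k - 1 - p / d) (p % d) (i + 1)) p := by
  set T' := setCell T (k - 1 - p / d) (p % d) (i + 1)
  set H := bracketHeight (rowWord k d T) i
  have hN := hp.1
  have hw' : ∀ q < k * d, rowWord k d T' q = if q = p then i + 1 else rowWord k d T q :=
    fun q hq => rowWord_setCell hN hq
  have htCnt : ∀ q ≤ k * d,
      tCnt k d i T' q = H q - (if p < q then 2 else 0) - H (k * d) + 2 := by
    intro q hq
    rw [tCnt_eq_bracketHeight hq, bracketHeight_of_eq_ite _ i hp.2.1 hw' hq,
      bracketHeight_of_eq_ite _ i hp.2.1 hw' le_rfl, if_pos hN]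
    ring
  have hle := hp.bracketHeight_le (le_refl (k * d))
  have hsucc := hp.bracketHeight_succ
  refine ⟨hN, by rw [rowWord_setCell hN hN, if_pos rfl], ?_, fun q hq => ?_, fun q hpq hq => ?_⟩
  · rw [htCnt p hN.le, if_neg (lt_irrefl p)]
    linarith
  · rw [htCnt p hN.le, htCnt q hq.le, if_neg (lt_irrefl p)]
    split_ifs with hpq
    · linarith [hp.bracketHeight_le hq.le]
    · linarith [hp.bracketHeight_lt (q := q) (by omega)]
  · rw [htCnt p hN.le, htCnt q hq.le, if_neg (lt_irrefl p), if_pos hpq]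
    linarith [hp.bracketHeight_le hq.le]

end fCond

theorem stmt_1_general (k d n i : ℕ) (hin : i < n) (T T' : ℕ → ℕ → ℕ)
    (hT : IsSSYT k d n T) (h : ftilde k d i T = some T') :
    (∃ r c, r < k ∧ c < d ∧ T r c = i ∧ T' r c = i + 1 ∧
      ∀ r' c', r' < k → c' < d → (r', c') ≠ (r, c) → T' r' c' = T r' c') ∧
    IsSSYT k d n T' ∧
    etilde k d i T' = some T := by
  obtain ⟨p, hp, rfl⟩ := exists_fCond_of_ftilde_eq_some h
  have hTp : T (k - 1 - p / d) (p % d) = i := hp.2.1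
  refine ⟨⟨k - 1 - p / d, p % d, Nat.sub_one_sub_lt_of_lt (Nat.div_lt_of_lt_mul' hp.1),
    Nat.mod_lt p hp.cols_pos, hTp, if_pos ⟨rfl, rfl⟩,
    fun r' c' _ _ hne => if_neg fun h => hne (Prod.ext h.1 h.2)⟩,
    hT.setCell_succ hTp hin hp.right_ne (hp.below_ne hT), ?_⟩
  rw [etilde_eq_of_eCond hp.eCond_setCell, setCell_setCell, ← hTp, setCell_eq_self]

/-- If `f̃_i(T) ≠ 0` then `f̃_i(T)` is obtained from `T` by increasing exactly one
entry from `i` to `i+1`; the result is again a semistandard tableau of the same shape,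
and `ẽ_i(f̃_i(T)) = T`. -/
theorem stmt_1 (k d n i : ℕ) (hi : 1 ≤ i) (hin : i < n) (T T' : ℕ → ℕ → ℕ)
    (hT : IsSSYT k d n T) (h : ftilde k d i T = some T') :
    (∃ r c, r < k ∧ c < d ∧ T r c = i ∧ T' r c = i + 1 ∧
      ∀ r' c', r' < k → c' < d → (r', c') ≠ (r, c) → T' r' c' = T r' c') ∧
    IsSSYT k d n T' ∧
    etilde k d i T' = some T :=
  stmt_1_general k d n i hin T T' hT h
end

section
/- The map f ↦ I(f) is a bijection between the set of (k,n)-bounded affine permutations and the set of (k,n)-Grassmann necklaces. -/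
/-- A `(k,n)`-bounded affine permutation: a bijection `f : ℤ → ℤ` with
`f(i+n) = f(i) + n`, `∑_{i=1}^n f(i) = C(n+1,2) + kn`, and `i ≤ f(i) ≤ i + n`. -/
def IsBAP (k n : ℕ) (f : ℤ → ℤ) : Prop :=
  Function.Bijective f ∧ (∀ i, f (i + n) = f i + n) ∧
  (∑ i ∈ Finset.Icc (1 : ℤ) (n : ℤ), f i) = ((n + 1).choose 2 : ℤ) + (k : ℤ) * n ∧
  ∀ i, i ≤ f i ∧ f i ≤ i + n

/-- The representative in `{1,…,n}` of an integer modulo `n`. -/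
def res (n : ℕ) (x : ℤ) : ℕ := ((x - 1) % (n : ℤ) + 1).toNat

/-- The Grassmann necklace of `f`: `I_a = { f(b) mod n : b < a, f(b) ≥ a }` with
representatives taken in `{1,…,n}` (only `b ∈ [a-n, a-1]` can contribute, by
boundedness). -/
noncomputable def necklaceOf (n : ℕ) (f : ℤ → ℤ) : ℕ → Finset ℕ := fun a =>
  ((Finset.Icc ((a : ℤ) - n) ((a : ℤ) - 1)).filter fun b => (a : ℤ) ≤ f b).image
    fun b => res n (f b)

/-- A `(k,n)`-Grassmann necklace, encoded as an `n`-periodic sequence `I : ℕ → Finset ℕ`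
of `k`-element subsets of `{1,…,n}` such that for each `a ∈ {1,…,n}`:
if `a ∉ I_a` then `I_{a+1} = I_a`, and if `a ∈ I_a` then
`I_{a+1} = (I_a \ {a}) ∪ {a'}` for some `a' ∈ {1,…,n}`. -/
def IsGN (k n : ℕ) (I : ℕ → Finset ℕ) : Prop :=
  (∀ a, I (a + n) = I a) ∧
  (∀ a, I a ⊆ Finset.Icc 1 n ∧ (I a).card = k) ∧
  (∀ a, 1 ≤ a → a ≤ n →
    (a ∉ I a → I (a + 1) = I a) ∧
    (a ∈ I a → ∃ a' ∈ Finset.Icc 1 n, I (a + 1) = insert a' (I a \ {a})))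

/-!
Read `f` as a juggling pattern: `necklaceOf n f a` records, modulo `n`, where the arcs `b ↦ f b`
passing over `a` (that is, `b < a ≤ f b`) land. Going from `a` to `a + 1` loses the arc landing at
`a` and gains the arc starting at `a`. Hence `I (a + 1) = I a \ {a} ∪ {f a mod n}` whenever
`f a ≠ a`, and the number of arcs over a point is constant; double counting `∑ (f b - b)` shows
that it is `k`.

Conversely, a necklace determines `f` on `[1, n]`: `f a = a` if `a ∉ I a`, and otherwise `f a` is
the first integer after `a` congruent to the element entering at step `a`. These entering elements
form a permutation of `[1, n]`, because over one period an element enters as often as it leaves,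
and it can leave only at its own position. The necklace of this `f` obeys the same step rule as
`I`, so for each `r` the two agree about `r` everywhere once they agree right after position `r`,
where the rule forgets the past.
-/

open Finset Function

theorem Int.ModEq.eq_of_mem_Ioc {n : ℕ} {c x y : ℤ} (h : x ≡ y [ZMOD n])
    (hx : x ∈ Set.Ioc c (c + n)) (hy : y ∈ Set.Ioc c (c + n)) : x = y := by
  have := Int.eq_zero_of_abs_lt_dvd h.dvd (abs_sub_lt_iff.mpr ⟨by grind, by grind⟩)
  omega

theorem Function.Periodic.sum_Icc_add {M : Type*} [AddCommMonoid M] {h : ℤ → M} {n : ℕ}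
    (hp : Periodic h n) (c : ℤ) : ∑ a ∈ Icc (1 : ℤ) n, h (a + c) = ∑ a ∈ Icc (1 : ℤ) n, h a := by
  rcases Nat.eq_zero_or_pos n with rfl | hn
  · simp
  let S : ℤ → M := fun c => ∑ a ∈ Icc (1 : ℤ) n, h (a + c)
  have hS : ∀ c, S c = ∑ a ∈ Icc (c + 1) (c + n), h a := fun c => by
    rw [add_comm c 1, add_comm c n, ← map_add_right_Icc, sum_map]
    rfl
  have hstep : ∀ c, S (c + 1) = S c := fun c => by
    rw [hS, hS, ← insert_Icc_add_one_left_eq_Icc (by omega : c + 1 ≤ c + n),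
      show c + 1 + n = c + n + 1 by ring, ← insert_Icc_right_eq_Icc_add_one (by omega),
      sum_insert (by simp), sum_insert (by simp), show c + n + 1 = c + 1 + n by ring, hp]
  rw [show ∑ a ∈ Icc (1 : ℤ) n, h a = S 0 by simp [S]]
  change S c = S 0
  induction c using Int.induction_on with
  | zero => rfl
  | succ i ih => exact (hstep _).trans ih
  | pred i ih => exact ((hstep _).symm.trans (congrArg S (sub_add_cancel _ _))).trans ih

lemma sum_Icc_one_id (n : ℕ) : ∑ i ∈ Icc (1 : ℤ) n, i = (n + 1).choose 2 := by
  induction n with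
  | zero => simp
  | succ m ih =>
    rw [Nat.cast_succ, ← insert_Icc_right_eq_Icc_add_one (by omega), sum_insert (by simp), ih,
      Nat.choose_succ_succ (m + 1) 1, Nat.choose_one_right]
    push_cast
    ring

lemma card_filter_entry_eq_card_filter_exit (p : ℕ → Prop) [DecidablePred p] {n : ℕ}
    (h : p (n + 1) ↔ p 1) :
    #{a ∈ Icc 1 n | ¬p a ∧ p (a + 1)} = #{a ∈ Icc 1 n | p a ∧ ¬p (a + 1)} := by
  rcases Nat.eq_zero_or_pos n with rfl | hn
  · rfl
  let g : ℕ → ℤ := fun a => if p a then 1 else 0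
  have htel : ∑ a ∈ Icc 1 n, (g (a + 1) - g a) = 0 := by
    rw [sum_Icc_sub hn]
    simp [g, h]
  have hterm : ∀ a, g (a + 1) - g a =
      (if ¬p a ∧ p (a + 1) then 1 else 0) - (if p a ∧ ¬p (a + 1) then 1 else 0) := fun a => by
    by_cases p a <;> by_cases p (a + 1) <;> simp [g, *]
  simp only [hterm, sum_sub_distrib, sum_boole] at htel
  exact_mod_cast sub_eq_zero.mp htel

section Residue

variable {n : ℕ}

lemma natCast_res (hn : 0 < n) (x : ℤ) : (res n x : ℤ) = (x - 1) % n + 1 := by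
  have := Int.emod_nonneg (x - 1) (by omega : (n : ℤ) ≠ 0)
  rw [res, Int.toNat_of_nonneg (by omega)]

lemma res_mem_Icc (hn : 0 < n) (x : ℤ) : res n x ∈ Icc 1 n := by
  have := Int.emod_nonneg (x - 1) (by omega : (n : ℤ) ≠ 0)
  have := Int.emod_lt_of_pos (x - 1) (by omega : (0 : ℤ) < n)
  have := natCast_res hn x
  rw [mem_Icc]
  omega

lemma res_modEq (hn : 0 < n) (x : ℤ) : (res n x : ℤ) ≡ x [ZMOD n] := by
  simpa [natCast_res hn] using (Int.mod_modEq (x - 1) n).add_right 1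

lemma res_eq_res_iff (hn : 0 < n) {x y : ℤ} : res n x = res n y ↔ x ≡ y [ZMOD n] := by
  refine ⟨fun h => (res_modEq hn x).symm.trans (h ▸ res_modEq hn y), fun h => ?_⟩
  have : (res n x : ℤ) = res n y := by
    rw [natCast_res hn, natCast_res hn, (h.sub_right 1).eq]
  exact_mod_cast this

lemma res_natCast {a : ℕ} (ha : a ∈ Icc 1 n) : res n a = a := by
  rw [mem_Icc] at ha
  have : ((a : ℤ) - 1) % n = a - 1 := Int.emod_eq_of_lt (by omega) (by omega)
  rw [res, this]
  omega

lemma res_eq_iff (hn : 0 < n) {x : ℤ} {a : ℕ} (ha : a ∈ Icc 1 n) :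
    res n x = a ↔ x ≡ a [ZMOD n] := by
  rw [← res_eq_res_iff hn, res_natCast ha]

lemma res_eq_self_iff (hn : 0 < n) {a : ℕ} (ha : a ∈ Icc 1 n) {x : ℤ} (h₁ : a ≤ x)
    (h₂ : x < a + n) : res n x = a ↔ x = a := by
  rw [res_eq_iff hn ha]
  refine ⟨fun h => h.eq_of_mem_Ioc (c := a - 1) ⟨?_, ?_⟩ ⟨?_, ?_⟩, fun h => h ▸ rfl⟩ <;> omega

lemma add_sub_emod_mem_Ioc (hn : 0 < n) (i p : ℤ) : i + n - (i - p) % n ∈ Set.Ioc i (i + n) := by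
  have := Int.emod_nonneg (i - p) (by omega : (n : ℤ) ≠ 0)
  have := Int.emod_lt_of_pos (i - p) (by omega : (0 : ℤ) < n)
  constructor <;> omega

lemma add_sub_emod_modEq (i p : ℤ) : i + n - (i - p) % n ≡ p [ZMOD n] := by
  rw [Int.modEq_iff_dvd, Int.emod_def]
  exact ⟨-1 - (i - p) / n, by ring⟩

lemma eq_add_sub_emod (hn : 0 < n) {i p y : ℤ} (hy : y ∈ Set.Ioc i (i + n))
    (h : y ≡ p [ZMOD n]) : y = i + n - (i - p) % n :=
  (h.trans (add_sub_emod_modEq i p).symm).eq_of_mem_Ioc hy (add_sub_emod_mem_Ioc hn i p)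

end Residue

section AffinePeriodic

variable {n : ℕ} {f : ℤ → ℤ} (hper : ∀ i, f (i + n) = f i + n)
include hper

lemma map_add_mul (i m : ℤ) : f (i + m * n) = f i + m * n := by
  have hp : Periodic (fun i => f i - i) n := fun i => by
    show f (i + n) - (i + n) = f i - i
    rw [hper]
    ring
  have := hp.int_mul m i
  simp only [Int.cast_id] at this
  linarith

lemma map_sub_self_eq_of_modEq {x y : ℤ} (h : x ≡ y [ZMOD n]) : f x - x = f y - y := by
  obtain ⟨m, rfl⟩ := Int.modEq_iff_add_fac.mp h
  rw [mul_comm, map_add_mul hper]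
  ring

lemma modEq_of_map_modEq (hinj : Injective f) {x y : ℤ} (h : f x ≡ f y [ZMOD n]) :
    x ≡ y [ZMOD n] := by
  obtain ⟨m, hm⟩ := Int.modEq_iff_add_fac.mp h
  have : y = x + m * n := hinj (by rw [map_add_mul hper]; linarith)
  rw [this]
  exact (Int.add_mul_modulus_modEq_iff.mpr rfl).symm

lemma injective_of_modEq (h : ∀ x y, f x ≡ f y [ZMOD n] → x ≡ y [ZMOD n]) : Injective f := by
  intro x y hxy
  obtain ⟨m, rfl⟩ := Int.modEq_iff_add_fac.mp (h x y (hxy ▸ Int.ModEq.refl _))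
  rw [mul_comm, map_add_mul hper] at hxy
  have : (n : ℤ) * m = 0 := by linarith
  rw [this, add_zero]

lemma surjective_of_modEq (h : ∀ y, ∃ x, f x ≡ y [ZMOD n]) : Surjective f := by
  intro y
  obtain ⟨x, hx⟩ := h y
  obtain ⟨m, hm⟩ := Int.modEq_iff_add_fac.mp hx
  exact ⟨x + m * n, by rw [map_add_mul hper]; linarith⟩

end AffinePeriodic

noncomputable def arcsOver (n : ℕ) (f : ℤ → ℤ) (a : ℤ) : Finset ℤ :=
  {b ∈ Icc (a - n) (a - 1) | a ≤ f b}

section NecklaceOf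

variable {n : ℕ} {f : ℤ → ℤ} (hn : 0 < n) (hbij : Bijective f)
  (hper : ∀ i, f (i + n) = f i + n) (hbd : ∀ i, i ≤ f i ∧ f i ≤ i + n)

include hbd in
lemma mem_arcsOver {a b : ℤ} : b ∈ arcsOver n f a ↔ b < a ∧ a ≤ f b := by
  have := hbd b
  simp only [arcsOver, mem_filter, mem_Icc]
  omega

include hbij hbd in
lemma card_arcsOver_succ (a : ℤ) : #(arcsOver n f (a + 1)) = #(arcsOver n f a) := by
  obtain ⟨σ, hσ⟩ := hbij.2 a
  have hσa : σ ≤ a := hσ ▸ (hbd σ).1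
  have hfa : a ≤ f a := (hbd a).1
  -- The arcs over `a` and the one starting at `a` are the arcs over `a + 1` and the one ending
  -- at `a`.
  have h : insert σ (arcsOver n f (a + 1)) = insert a (arcsOver n f a) := by
    ext b
    simp only [mem_insert, mem_arcsOver hbd]
    have hb : f b = f σ ↔ b = σ := hbij.1.eq_iff
    have ha : f a = f σ ↔ a = σ := hbij.1.eq_iff
    rw [hσ] at hb ha
    have := (hbd b).1
    omega
  have hσ' : σ ∉ arcsOver n f (a + 1) := by rw [mem_arcsOver hbd]; omega
  have ha' : a ∉ arcsOver n f a := by rw [mem_arcsOver hbd]; omega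
  have := congrArg card h
  rwa [card_insert_of_notMem hσ', card_insert_of_notMem ha', add_left_inj] at this

include hper hbd in
lemma sum_card_arcsOver :
    ∑ a ∈ Icc (1 : ℤ) n, (#(arcsOver n f a) : ℤ) = ∑ b ∈ Icc (1 : ℤ) n, (f b - b) := by
  have harcs : ∀ a, (#(arcsOver n f a) : ℤ) =
      ∑ j ∈ Icc (1 : ℤ) n, if a ≤ f (a - j) then 1 else 0 := by
    intro a
    rw [arcsOver, card_filter, Nat.cast_sum]
    refine sum_nbij' (a - ·) (a - ·) ?_ ?_ ?_ ?_ ?_ <;> intro b hb <;>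
      simp_all only [mem_Icc, sub_sub_cancel] <;> first | omega | split_ifs <;> rfl
  have hexcess : ∀ b, f b - b = ∑ j ∈ Icc (1 : ℤ) n, if b + j ≤ f b then 1 else 0 := by
    intro b
    have := hbd b
    rw [sum_boole, show {j ∈ Icc (1 : ℤ) n | b + j ≤ f b} = Icc 1 (f b - b) by ext; simp; omega,
      Int.card_Icc, Int.toNat_of_nonneg (by omega)]
    ring
  simp_rw [harcs, hexcess]
  rw [sum_comm]
  conv_rhs => rw [sum_comm]
  refine sum_congr rfl fun j _ => ?_
  have hp : Periodic (fun a => if a ≤ f (a - j) then (1 : ℤ) else 0) n := fun a => by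
    show (if a + n ≤ f (a + n - j) then (1 : ℤ) else 0) = _
    simp only [add_sub_right_comm, hper, add_le_add_iff_right]
  rw [← hp.sum_Icc_add j]
  simp

lemma necklaceOf_eq_image (a : ℕ) :
    necklaceOf n f a = (arcsOver n f a).image fun b => res n (f b) := rfl

include hbd in
lemma mem_necklaceOf {a r : ℕ} :
    r ∈ necklaceOf n f a ↔ ∃ b < (a : ℤ), a ≤ f b ∧ res n (f b) = r := by
  simp [necklaceOf_eq_image, mem_arcsOver hbd, and_assoc]

include hn in
lemma necklaceOf_subset (a : ℕ) : necklaceOf n f a ⊆ Icc 1 n := by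
  intro r hr
  obtain ⟨b, -, rfl⟩ := mem_image.mp hr
  exact res_mem_Icc hn _

include hn hper in
lemma card_necklaceOf_eq_card_arcsOver (hinj : Injective f) (a : ℕ) :
    #(necklaceOf n f a) = #(arcsOver n f a) := by
  refine card_image_of_injOn fun b hb b' hb' h => ?_
  simp only [coe_filter, Set.mem_ofPred_eq, mem_Icc] at hb hb'
  refine (modEq_of_map_modEq hper hinj ((res_eq_res_iff hn).mp h)).eq_of_mem_Ioc
    (c := a - n - 1) ?_ ?_ <;> simp only [Set.mem_Ioc] <;> omega

include hn hper hbd in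
lemma necklaceOf_add (a : ℕ) : necklaceOf n f (a + n) = necklaceOf n f a := by
  ext r
  simp only [mem_necklaceOf hbd, Nat.cast_add]
  constructor
  · rintro ⟨b, hb, hab, rfl⟩
    have h := hper (b - n)
    rw [sub_add_cancel] at h
    refine ⟨b - n, by omega, by omega, ?_⟩
    rw [h, res_eq_res_iff hn]
    exact Int.modEq_add_modulus_iff.mpr rfl
  · rintro ⟨b, hb, hab, rfl⟩
    refine ⟨b + n, by omega, by rw [hper]; omega, ?_⟩
    rw [hper, res_eq_res_iff hn]
    exact Int.add_modulus_modEq_iff.mpr rfl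

include hn hbij hbd in
lemma self_mem_necklaceOf_iff {a : ℕ} (ha : a ∈ Icc 1 n) : a ∈ necklaceOf n f a ↔ f a ≠ a := by
  rw [mem_necklaceOf hbd]
  constructor
  · rintro ⟨b, hb, hab, hres⟩ hfa
    have := (hbd b).2
    rw [res_eq_self_iff hn ha hab (by omega), ← hfa] at hres
    exact hb.ne (hbij.1 hres)
  · intro hfa
    obtain ⟨σ, hσ⟩ := hbij.2 a
    have hσa : σ ≠ a := fun h => hfa (h ▸ hσ)
    have := (hbd σ).1
    exact ⟨σ, by omega, hσ.ge, by rw [hσ]; exact res_natCast ha⟩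

include hn hbij hbd in
lemma mem_necklaceOf_succ_iff {a : ℕ} (ha : a ∈ Icc 1 n) (r : ℕ) :
    r ∈ necklaceOf n f (a + 1) ↔
      (a ∈ necklaceOf n f a ∧ r = res n (f a)) ∨ (r ∈ necklaceOf n f a ∧ r ≠ a) := by
  rw [self_mem_necklaceOf_iff hn hbij hbd ha, mem_necklaceOf hbd, mem_necklaceOf hbd]
  have hfa := hbd a
  push_cast
  constructor
  · rintro ⟨b, hb, hab, rfl⟩
    rcases (Int.lt_add_one_iff.mp hb).lt_or_eq with hb | rfl
    · have := (hbd b).2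
      refine Or.inr ⟨⟨b, hb, by omega, rfl⟩, fun h => ?_⟩
      rw [res_eq_self_iff hn ha (by omega) (by omega)] at h
      omega
    · exact Or.inl ⟨by omega, rfl⟩
  · rintro (⟨hfa', rfl⟩ | ⟨⟨b, hb, hab, rfl⟩, hne⟩)
    · exact ⟨a, by omega, by omega, rfl⟩
    · have := (hbd b).2
      have : f b ≠ a := fun h => hne ((res_eq_self_iff hn ha hab (by omega)).mpr h)
      exact ⟨b, by omega, by omega, rfl⟩

end NecklaceOf

section BAP

variable {k n : ℕ} {f : ℤ → ℤ}

lemma IsBAP.card_necklaceOf (hn : 0 < n) (hf : IsBAP k n f) (a : ℕ) :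
    #(necklaceOf n f a) = k := by
  obtain ⟨hbij, hper, hsum, hbd⟩ := hf
  have hconst : ∀ a : ℤ, #(arcsOver n f a) = #(arcsOver n f 0) := fun a => by
    induction a using Int.induction_on with
    | zero => rfl
    | succ i ih => rw [card_arcsOver_succ hbij hbd, ih]
    | pred i ih => rw [← ih, ← card_arcsOver_succ hbij hbd, sub_add_cancel]
  have htotal := sum_card_arcsOver hper hbd
  simp only [hconst, sum_const, Int.card_Icc, add_sub_cancel_right, Int.toNat_natCast,
    nsmul_eq_mul, sum_sub_distrib, hsum, sum_Icc_one_id, add_sub_cancel_left] at htotal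
  rw [card_necklaceOf_eq_card_arcsOver hn hper hbij.1, hconst]
  exact_mod_cast mul_left_cancel₀ (by omega : (n : ℤ) ≠ 0) (htotal.trans (mul_comm _ _))

theorem IsBAP.necklaceOf_isGN (hn : 0 < n) (hf : IsBAP k n f) : IsGN k n (necklaceOf n f) := by
  obtain ⟨hbij, hper, -, hbd⟩ := id hf
  refine ⟨necklaceOf_add hn hper hbd, fun a => ⟨necklaceOf_subset hn a, hf.card_necklaceOf hn a⟩,
    fun a ha₁ ha₂ => ⟨fun h => ?_, fun h => ⟨res n (f a), res_mem_Icc hn _, ?_⟩⟩⟩ <;>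
    ext r <;>
    simp only [mem_necklaceOf_succ_iff hn hbij hbd (mem_Icc.mpr ⟨ha₁, ha₂⟩), h, mem_insert,
      mem_sdiff, mem_singleton] <;>
    grind

end BAP

/-- The element entering a Grassmann necklace at step `a`, or `a` itself if `a ∉ I a`. When
`I (a + 1) = insert a' (I a \ {a})` with `a' ∉ I a \ {a}`, the sum runs over `{a'}`. -/
def necklacePerm (I : ℕ → Finset ℕ) (a : ℕ) : ℕ :=
  if a ∈ I a then ∑ x ∈ I (a + 1) \ (I a \ {a}), x else a

section GN

variable {k n : ℕ} {I : ℕ → Finset ℕ} {a : ℕ}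

lemma necklacePerm_of_notMem (h : a ∉ I a) : necklacePerm I a = a := if_neg h

lemma necklacePerm_eq_of_succ_eq {x : ℕ} (h : a ∈ I a) (hx : x ∉ I a \ {a})
    (hsucc : I (a + 1) = insert x (I a \ {a})) : necklacePerm I a = x := by
  rw [necklacePerm, if_pos h, hsucc, insert_sdiff_cancel hx, sum_singleton]

lemma IsGN.notMem_sdiff_of_succ_eq (hI : IsGN k n I) {x : ℕ} (h : a ∈ I a)
    (hsucc : I (a + 1) = insert x (I a \ {a})) : x ∉ I a \ {a} := by
  intro hx
  have hcard := (hI.2.1 (a + 1)).2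
  rw [hsucc, insert_eq_of_mem hx, sdiff_singleton_eq_erase, card_erase_of_mem h, (hI.2.1 a).2]
    at hcard
  have := (hI.2.1 a).2 ▸ card_pos.mpr ⟨a, h⟩
  omega

lemma IsGN.succ_eq_insert_necklacePerm (hI : IsGN k n I) (ha : a ∈ Icc 1 n) (h : a ∈ I a) :
    I (a + 1) = insert (necklacePerm I a) (I a \ {a}) := by
  obtain ⟨a', -, hsucc⟩ := (hI.2.2 a (mem_Icc.mp ha).1 (mem_Icc.mp ha).2).2 h
  rwa [necklacePerm_eq_of_succ_eq h (hI.notMem_sdiff_of_succ_eq h hsucc) hsucc]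

lemma IsGN.necklacePerm_mem_Icc (hI : IsGN k n I) (ha : a ∈ Icc 1 n) :
    necklacePerm I a ∈ Icc 1 n := by
  by_cases h : a ∈ I a
  · exact (hI.2.1 (a + 1)).1 (hI.succ_eq_insert_necklacePerm ha h ▸ mem_insert_self _ _)
  · rwa [necklacePerm_of_notMem h]

lemma IsGN.mem_succ_iff (hI : IsGN k n I) (ha : a ∈ Icc 1 n) (r : ℕ) :
    r ∈ I (a + 1) ↔ (a ∈ I a ∧ r = necklacePerm I a) ∨ (r ∈ I a ∧ r ≠ a) := by
  by_cases h : a ∈ I a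
  · rw [hI.succ_eq_insert_necklacePerm ha h]
    simp [h]
  · rw [(hI.2.2 a (mem_Icc.mp ha).1 (mem_Icc.mp ha).2).1 h]
    grind

lemma IsGN.card_filter_necklacePerm_eq_le (hI : IsGN k n I) (r : ℕ) :
    #{c ∈ Icc 1 n | necklacePerm I c = r ∧ c ≠ r} ≤
      #{c ∈ Icc 1 n | c = r ∧ necklacePerm I c ≠ c} := by
  -- Such a `c` is a step where `r` enters the necklace; `r` can only leave at step `r`.
  have hentry : {c ∈ Icc 1 n | necklacePerm I c = r ∧ c ≠ r} ⊆
      {c ∈ Icc 1 n | r ∉ I c ∧ r ∈ I (c + 1)} := fun c hc => by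
    obtain ⟨hc, hcr, hne⟩ := mem_filter.mp hc
    have h : c ∈ I c := by_contra fun h => hne (hcr ▸ necklacePerm_of_notMem h).symm
    have hsucc := hI.succ_eq_insert_necklacePerm hc h
    rw [← hcr]
    refine mem_filter.mpr ⟨hc, fun hmem => ?_, hsucc ▸ mem_insert_self _ _⟩
    exact hI.notMem_sdiff_of_succ_eq h hsucc (mem_sdiff.mpr ⟨hmem, by simpa [hcr] using hne.symm⟩)
  have hexit : {c ∈ Icc 1 n | r ∈ I c ∧ r ∉ I (c + 1)} ⊆
      {c ∈ Icc 1 n | c = r ∧ necklacePerm I c ≠ c} := fun c hc => by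
    obtain ⟨hc, h₁, h₂⟩ := mem_filter.mp hc
    rw [hI.mem_succ_iff hc] at h₂
    exact mem_filter.mpr ⟨hc, by grind⟩
  calc _ ≤ _ := card_le_card hentry
    _ = _ := card_filter_entry_eq_card_filter_exit _ (by rw [add_comm, hI.1])
    _ ≤ _ := card_le_card hexit

theorem IsGN.injOn_necklacePerm (hI : IsGN k n I) : Set.InjOn (necklacePerm I) (Icc 1 n) := by
  intro a ha b hb hab
  by_contra hne
  set r := necklacePerm I a
  have hle := hI.card_filter_necklacePerm_eq_le r
  by_cases hr : necklacePerm I r = r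
  · obtain ⟨c, hc⟩ : ∃ c, c ∈ {c ∈ Icc 1 n | necklacePerm I c = r ∧ c ≠ r} := by
      by_cases har : a = r
      · exact ⟨b, mem_filter.mpr ⟨hb, hab.symm, fun h => hne (har.trans h.symm)⟩⟩
      · exact ⟨a, mem_filter.mpr ⟨ha, rfl, har⟩⟩
    have hexit : {c ∈ Icc 1 n | c = r ∧ necklacePerm I c ≠ c} = ∅ :=
      filter_eq_empty_iff.mpr fun c _ h => h.2 (h.1 ▸ hr)
    rw [hexit, card_empty, Nat.le_zero, card_eq_zero] at hle
    exact notMem_empty c (hle ▸ hc)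
  · have har : a ≠ r := fun h => hr (by rw [← h]; exact h.symm)
    have hbr : b ≠ r := fun h => hr (by rw [← h, ← hab]; exact h.symm)
    have hentries : 1 < #{c ∈ Icc 1 n | necklacePerm I c = r ∧ c ≠ r} :=
      one_lt_card.mpr ⟨a, mem_filter.mpr ⟨ha, rfl, har⟩, b, mem_filter.mpr ⟨hb, hab.symm, hbr⟩, hne⟩
    have hexits : #{c ∈ Icc 1 n | c = r ∧ necklacePerm I c ≠ c} ≤ 1 :=
      card_le_one.mpr fun x hx y hy => by rw [(mem_filter.mp hx).2.1, (mem_filter.mp hy).2.1]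
    omega

theorem IsGN.bijOn_necklacePerm (hI : IsGN k n I) :
    Set.BijOn (necklacePerm I) (Icc 1 n) (Icc 1 n) :=
  (Set.Finite.injOn_iff_bijOn_of_mapsTo (finite_toSet _)
    fun _ ha => hI.necklacePerm_mem_Icc ha).mp hI.injOn_necklacePerm

end GN

theorem eq_of_forall_mem_succ_iff {n : ℕ} {X Y : ℕ → Finset ℕ} (p : ℕ → ℕ)
    (hX : ∀ a, X (a + n) = X a) (hY : ∀ a, Y (a + n) = Y a)
    (hXsub : ∀ a, X a ⊆ Icc 1 n) (hYsub : ∀ a, Y a ⊆ Icc 1 n)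
    (hself : ∀ a ∈ Icc 1 n, a ∈ X a ↔ a ∈ Y a)
    (hXsucc : ∀ a ∈ Icc 1 n, ∀ r, r ∈ X (a + 1) ↔ (a ∈ X a ∧ r = p a) ∨ (r ∈ X a ∧ r ≠ a))
    (hYsucc : ∀ a ∈ Icc 1 n, ∀ r, r ∈ Y (a + 1) ↔ (a ∈ Y a ∧ r = p a) ∨ (r ∈ Y a ∧ r ≠ a)) :
    X = Y := by
  funext a
  ext r
  by_cases hr : r ∉ Icc 1 n
  · exact iff_of_false (fun h => hr (hXsub a h)) (fun h => hr (hYsub a h))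
  rw [not_not] at hr
  have hn : 0 < n := by grind
  have hstep : ∀ c ∈ Icc 1 n, (r ∈ X c ↔ r ∈ Y c) → (r ∈ X (c + 1) ↔ r ∈ Y (c + 1)) :=
    fun c hc h => by rw [hXsucc c hc, hYsucc c hc, hself c hc, h]
  -- Right after step `r`, membership of `r` no longer depends on the past.
  obtain ⟨c₀, hc₀, h₀⟩ : ∃ c₀ ∈ Icc 1 (n + 1), (r ∈ X c₀ ↔ r ∈ Y c₀) := by
    by_cases h : r ∈ X r
    · refine ⟨r + 1, by grind, ?_⟩
      rw [hXsucc r hr, hYsucc r hr, ← hself r hr]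
    · exact ⟨r, by grind, iff_of_false h ((hself r hr).not.mp h)⟩
  have hforward : ∀ c₀ ∈ Icc 1 (n + 1), (r ∈ X c₀ ↔ r ∈ Y c₀) →
      ∀ c ∈ Icc c₀ (n + 1), (r ∈ X c ↔ r ∈ Y c) := by
    intro c₀ hc₀ h c hc
    induction c, (mem_Icc.mp hc).1 using Nat.le_induction with
    | base => exact h
    | succ c hc₀c ih => exact hstep c (by grind) (ih (by grind))
  have h₁ : r ∈ X 1 ↔ r ∈ Y 1 := by
    have := hforward c₀ hc₀ h₀ (n + 1) (by grind)
    rwa [add_comm, hX, hY] at this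
  rw [← (show Periodic X n from hX).map_mod_nat a, ← (show Periodic Y n from hY).map_mod_nat a]
  rcases Nat.eq_zero_or_pos (a % n) with h | h
  · rw [h, ← hX, ← hY, zero_add]
    exact hforward 1 (by grind) h₁ n (by grind)
  · exact hforward 1 (by grind) h₁ _ (mem_Icc.mpr ⟨h, (Nat.mod_lt a hn).le.trans n.le_succ⟩)

/-- The bounded affine permutation of a necklace; `i + n - (i - p) % n` is the first integer after
`i` congruent to `p` modulo `n`. -/
def bapOf (n : ℕ) (I : ℕ → Finset ℕ) (i : ℤ) : ℤ :=
  if res n i ∈ I (res n i) then i + n - (i - necklacePerm I (res n i)) % n else i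

section BapOf

variable {k n : ℕ} {I : ℕ → Finset ℕ}

lemma bapOf_add (hn : 0 < n) (i : ℤ) : bapOf n I (i + n) = bapOf n I i + n := by
  have hres : res n (i + n) = res n i :=
    (res_eq_res_iff hn).mpr (Int.add_modulus_modEq_iff.mpr rfl)
  unfold bapOf
  rw [hres, add_sub_right_comm i n, Int.add_emod_right]
  split_ifs <;> ring

lemma bapOf_bounds (hn : 0 < n) (i : ℤ) : i ≤ bapOf n I i ∧ bapOf n I i ≤ i + n := by
  unfold bapOf
  have := add_sub_emod_mem_Ioc hn i (necklacePerm I (res n i))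
  split_ifs
  · exact ⟨this.1.le, this.2⟩
  · omega

lemma bapOf_modEq (hn : 0 < n) (i : ℤ) : bapOf n I i ≡ necklacePerm I (res n i) [ZMOD n] := by
  unfold bapOf
  split_ifs with h
  · exact add_sub_emod_modEq i _
  · rw [necklacePerm_of_notMem h]
    exact (res_modEq hn i).symm

lemma bapOf_eq_self_iff (hn : 0 < n) (i : ℤ) : bapOf n I i = i ↔ res n i ∉ I (res n i) := by
  unfold bapOf
  split_ifs with h
  · simpa [h] using (add_sub_emod_mem_Ioc hn i (necklacePerm I (res n i))).1.ne'
  · simpa using h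

theorem IsGN.bijective_bapOf (hn : 0 < n) (hI : IsGN k n I) : Bijective (bapOf n I) := by
  constructor
  · refine injective_of_modEq (bapOf_add hn) fun x y hxy => ?_
    have hperm : necklacePerm I (res n x) = necklacePerm I (res n y) := by
      rw [← res_natCast (hI.necklacePerm_mem_Icc (res_mem_Icc hn x)),
        ← res_natCast (hI.necklacePerm_mem_Icc (res_mem_Icc hn y)), res_eq_res_iff hn]
      exact (bapOf_modEq hn x).symm.trans (hxy.trans (bapOf_modEq hn y))
    exact (res_eq_res_iff hn).mp
      (hI.injOn_necklacePerm (res_mem_Icc hn x) (res_mem_Icc hn y) hperm)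
  · refine surjective_of_modEq (bapOf_add hn) fun y => ?_
    obtain ⟨c, hc, hcy⟩ := hI.bijOn_necklacePerm.surjOn (res_mem_Icc hn y)
    refine ⟨c, (bapOf_modEq hn c).trans ?_⟩
    rw [res_natCast hc, hcy]
    exact res_modEq hn y

theorem IsGN.necklaceOf_bapOf (hn : 0 < n) (hI : IsGN k n I) : necklaceOf n (bapOf n I) = I := by
  have hbij := hI.bijective_bapOf hn
  have hbd := bapOf_bounds (I := I) hn
  have hself : ∀ a ∈ Icc 1 n, a ∈ necklaceOf n (bapOf n I) a ↔ a ∈ I a := fun a ha => by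
    rw [self_mem_necklaceOf_iff hn hbij hbd ha, Ne, bapOf_eq_self_iff hn, res_natCast ha, not_not]
  refine eq_of_forall_mem_succ_iff (necklacePerm I) (necklaceOf_add hn (bapOf_add hn) hbd) hI.1
    (necklaceOf_subset hn) (fun a => (hI.2.1 a).1) hself (fun a ha r => ?_)
    (fun a ha => hI.mem_succ_iff ha)
  have hres : res n (bapOf n I a) = necklacePerm I a := by
    rw [res_eq_iff hn (hI.necklacePerm_mem_Icc ha)]
    simpa [res_natCast ha] using bapOf_modEq (I := I) hn a
  rw [mem_necklaceOf_succ_iff hn hbij hbd ha, hres]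

theorem IsGN.isBAP_bapOf (hn : 0 < n) (hI : IsGN k n I) : IsBAP k n (bapOf n I) := by
  have hbij := hI.bijective_bapOf hn
  refine ⟨hbij, bapOf_add hn, ?_, bapOf_bounds hn⟩
  have htotal := sum_card_arcsOver (bapOf_add (I := I) hn) (bapOf_bounds hn)
  have hcard : ∀ a ∈ Icc (1 : ℤ) n, (#(arcsOver n (bapOf n I) a) : ℤ) = k := fun a ha => by
    lift a to ℕ using (by grind)
    rw [← card_necklaceOf_eq_card_arcsOver hn (bapOf_add hn) hbij.1, hI.necklaceOf_bapOf hn,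
      (hI.2.1 a).2]
  rw [sum_congr rfl hcard, sum_const, Int.card_Icc, add_sub_cancel_right, Int.toNat_natCast,
    nsmul_eq_mul, sum_sub_distrib, sum_Icc_one_id] at htotal
  linarith

theorem IsBAP.bapOf_necklaceOf (hn : 0 < n) {f : ℤ → ℤ} (hf : IsBAP k n f) :
    bapOf n (necklaceOf n f) = f := by
  obtain ⟨hbij, hper, -, hbd⟩ := id hf
  funext i
  have hc := res_mem_Icc hn i
  have hshift := map_sub_self_eq_of_modEq hper (res_modEq hn i).symm
  rw [bapOf]
  split_ifs with hmem
  · have hsucc : necklaceOf n f (res n i + 1) =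
        insert (res n (f (res n i))) (necklaceOf n f (res n i) \ {res n i}) := by
      ext r
      rw [mem_necklaceOf_succ_iff hn hbij hbd hc]
      simp [hmem]
    rw [necklacePerm_eq_of_succ_eq hmem
      ((hf.necklaceOf_isGN hn).notMem_sdiff_of_succ_eq hmem hsucc) hsucc]
    have hfi : f i ≡ res n (f (res n i)) [ZMOD n] := by
      refine Int.ModEq.trans ?_ (res_modEq hn _).symm
      rw [Int.modEq_iff_dvd, show f (res n i) - f i = res n i - i by omega]
      exact Int.modEq_iff_dvd.mp (res_modEq hn i).symm
    have hfc := (self_mem_necklaceOf_iff hn hbij hbd hc).mp hmem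
    have := (hbd (res n i)).1
    exact (eq_add_sub_emod hn ⟨by omega, (hbd i).2⟩ hfi).symm
  · have := (self_mem_necklaceOf_iff hn hbij hbd hc).not.mp hmem
    omega

end BapOf

theorem stmt_2_general (k n : ℕ) (hn : 0 < n) :
    Set.BijOn (necklaceOf n) {f | IsBAP k n f} {I | IsGN k n I} :=
  Set.InvOn.bijOn ⟨fun _ hf => IsBAP.bapOf_necklaceOf hn hf, fun _ hI => hI.necklaceOf_bapOf hn⟩
    (fun _ hf => IsBAP.necklaceOf_isGN hn hf) (fun _ hI => hI.isBAP_bapOf hn)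

/-- The map `f ↦ I(f)` is a bijection between `(k,n)`-bounded affine permutations and
`(k,n)`-Grassmann necklaces. -/
theorem stmt_2 (k n : ℕ) (hn : 0 < n) (hk : k ≤ n) :
    Set.BijOn (necklaceOf n) {f | IsBAP k n f} {I | IsGN k n I} :=
  stmt_2_general k n hn
end

section
/- Let (τ,T) be a (k,n)-partial noncrossing pairing, and define θ(τ,T) = (I_1,I_2) where I_1 ∩ I_2 = T and for each pair (a,b) ∈ τ with a < b we put a ∈ I_1 and b ∈ I_2. Then (I_1,I_2) is a standard pair, i.e., I_1 and I_2 form the two columns of a semistandard tableau of shape 2^k; moreover θ is a bijection from (k,n)-partial noncrossing pairings to semistandard tableaux of shape 2^k with entries in [n]. -/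
/-- A `(k,n)`-partial noncrossing pairing: a noncrossing matching `τ` (a set of pairs
`(a,b)` with `a < b`, pairwise disjoint endpoints in `{1,…,n}`, no two pairs crossing)
of a subset of `{1,…,n}`, together with a set `T` of marked vertices disjoint from the
endpoints, with `|T| + |τ| = k`. -/
def IsPNP (k n : ℕ) (τ : Finset (ℕ × ℕ)) (T : Finset ℕ) : Prop :=
  (∀ p ∈ τ, p.1 < p.2 ∧ p.1 ∈ Finset.Icc 1 n ∧ p.2 ∈ Finset.Icc 1 n) ∧
  T ⊆ Finset.Icc 1 n ∧
  (∀ p ∈ τ, ∀ q ∈ τ, p ≠ q → p.1 ≠ q.1 ∧ p.1 ≠ q.2 ∧ p.2 ≠ q.1 ∧ p.2 ≠ q.2) ∧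
  (∀ p ∈ τ, p.1 ∉ T ∧ p.2 ∉ T) ∧
  (∀ p ∈ τ, ∀ q ∈ τ, ¬(p.1 < q.1 ∧ q.1 < p.2 ∧ p.2 < q.2)) ∧
  T.card + τ.card = k

/-- The map `θ` from partial noncrossing pairings to pairs of `k`-subsets:
`I₁ = T ∪ {smaller endpoints}`, `I₂ = T ∪ {larger endpoints}`. -/
def theta (τ : Finset (ℕ × ℕ)) (T : Finset ℕ) : Finset ℕ × Finset ℕ :=
  (T ∪ τ.image Prod.fst, T ∪ τ.image Prod.snd)

/-- `(I,J)` is a standard pair of `k`-subsets of `{1,…,n}`: the `r`-th smallest element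
of `I` is at most the `r`-th smallest element of `J` for all `r` (so `I` and `J` form
the two columns of a semistandard tableau of shape `2^k`). -/
def IsStandardPair (k n : ℕ) (I J : Finset ℕ) : Prop :=
  I.card = k ∧ J.card = k ∧ I ⊆ Finset.Icc 1 n ∧ J ⊆ Finset.Icc 1 n ∧
  ∀ r, r < k → (I.sort (· ≤ ·)).getD r 0 ≤ (J.sort (· ≤ ·)).getD r 0

/-- `τ` is the partial noncrossing matching `θ⁻¹(I,J)` associated to the pair `(I,J)`:
the marked vertices are `I ∩ J`, and `θ` sends `(τ, I ∩ J)` to `(I,J)`. -/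
def Matching (k n : ℕ) (I J : Finset ℕ) (τ : Finset (ℕ × ℕ)) : Prop :=
  IsPNP k n τ (I ∩ J) ∧ (I ∩ J) ∪ τ.image Prod.fst = I ∧ (I ∩ J) ∪ τ.image Prod.snd = J

/-!
Write `I₁ = T ⊔ A` and `I₂ = T ⊔ B`, where `A` and `B` are the left and right endpoints of `τ`.
Comparing sorted columns entrywise is the same as the ballot condition
`#{b ∈ B | b < x} ≤ #{a ∈ A | a < x}` for all `x`, and the common part `T` cancels from it.
Every matching of `A` with `B` by pairs `a < b` satisfies the ballot condition. Conversely, under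
the ballot condition, pairing the smallest `b ∈ B` with the largest `a ∈ A` below it and
recursing builds a noncrossing matching; and a noncrossing matching has no other choice for the
partner of the smallest right endpoint, which makes it unique.
-/

open Finset

lemma card_filter_union_of_disjoint {α : Type*} [DecidableEq α] {s t : Finset α}
    (h : Disjoint s t) (p : α → Prop) [DecidablePred p] :
    #{x ∈ s ∪ t | p x} = #{x ∈ s | p x} + #{x ∈ t | p x} := by
  rw [filter_union, card_union_of_disjoint (disjoint_filter_filter h)]

lemma card_filter_sdiff_add_card_filter_inter {α : Type*} [DecidableEq α] (s t : Finset α)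
    (p : α → Prop) [DecidablePred p] :
    #{x ∈ s \ t | p x} + #{x ∈ s ∩ t | p x} = #{x ∈ s | p x} := by
  rw [← card_filter_union_of_disjoint (disjoint_sdiff_inter s t), sdiff_union_inter]

lemma card_filter_image_of_injOn {α β : Type*} [DecidableEq β] {f : α → β} {s : Finset α}
    (hf : Set.InjOn f s) (p : β → Prop) [DecidablePred p] :
    #{y ∈ s.image f | p y} = #{x ∈ s | p (f x)} := by
  rw [filter_image, card_image_of_injOn (hf.mono (coe_subset.2 (filter_subset _ _)))]

lemma image_erase_of_injOn {α β : Type*} [DecidableEq α] [DecidableEq β] {f : α → β}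
    {s : Finset α} (hf : Set.InjOn f s) {a : α} (ha : a ∈ s) :
    (s.erase a).image f = (s.image f).erase (f a) := by
  rw [← sdiff_singleton_eq_erase, image_sdiff_of_injOn hf (singleton_subset_iff.2 ha),
    image_singleton, sdiff_singleton_eq_erase]

lemma nth_mem_eq_getD_sort (S : Finset ℕ) (r : ℕ) :
    Nat.nth (· ∈ S) r = (S.sort (· ≤ ·)).getD r 0 := by
  have hS : (Set.ofPred (· ∈ S)).Finite := S.finite_toSet
  rw [Nat.nth_eq_getD_sort hS]
  congr
  ext
  simp [Set.ofPred]

lemma count_mem_eq_card_filter_lt (S : Finset ℕ) (x : ℕ) :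
    Nat.count (· ∈ S) x = #{s ∈ S | s < x} := by
  rw [Nat.count_eq_card_filter_range]
  congr 1
  ext
  simp [and_comm]

lemma getD_sort_lt_iff {S : Finset ℕ} {r : ℕ} (hr : r < #S) (x : ℕ) :
    (S.sort (· ≤ ·)).getD r 0 < x ↔ r < #{s ∈ S | s < x} := by
  rw [← nth_mem_eq_getD_sort, ← count_mem_eq_card_filter_lt]
  have hr' : ∀ hf : (Set.ofPred (· ∈ S)).Finite, r < #hf.toFinset := fun hf => by
    convert hr using 2
    ext
    simp [Set.ofPred]
  refine ⟨fun h => ?_, Nat.nth_lt_of_lt_count⟩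
  calc r < Nat.count (· ∈ S) (Nat.nth (· ∈ S) r + 1) := by rw [Nat.count_nth_succ hr']; omega
    _ ≤ _ := Nat.count_monotone _ h

theorem forall_getD_sort_le_iff {I J : Finset ℕ} (hIJ : #I = #J) :
    (∀ r < #J, (I.sort (· ≤ ·)).getD r 0 ≤ (J.sort (· ≤ ·)).getD r 0) ↔
      ∀ x, #{j ∈ J | j < x} ≤ #{i ∈ I | i < x} := by
  constructor
  · intro h x
    by_contra! hlt
    set r := #{i ∈ I | i < x}
    have hrJ : r < #J := hlt.trans_le (card_le_card (filter_subset _ _))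
    have hJ := (getD_sort_lt_iff hrJ x).2 hlt
    exact lt_irrefl r ((getD_sort_lt_iff (hIJ ▸ hrJ) x).1 ((h r hrJ).trans_lt hJ))
  · intro h r hr
    rw [← Nat.lt_succ_iff, getD_sort_lt_iff (hIJ ▸ hr)]
    exact ((getD_sort_lt_iff hr _).1 (Nat.lt_succ_self _)).trans_le (h _)

lemma isStandardPair_iff {k n : ℕ} {I J : Finset ℕ} :
    IsStandardPair k n I J ↔ #I = k ∧ #J = k ∧ I ⊆ Icc 1 n ∧ J ⊆ Icc 1 n ∧
      ∀ x, #{j ∈ J | j < x} ≤ #{i ∈ I | i < x} := by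
  refine ⟨fun ⟨hI, hJ, hIn, hJn, h⟩ => ?_, fun ⟨hI, hJ, hIn, hJn, h⟩ => ?_⟩ <;> subst hJ
  · exact ⟨hI, rfl, hIn, hJn, (forall_getD_sort_le_iff hI).1 h⟩
  · exact ⟨hI, rfl, hIn, hJn, (forall_getD_sort_le_iff hI).2 h⟩

structure IsNoncrossingMatching (A B : Finset ℕ) (τ : Finset (ℕ × ℕ)) : Prop where
  fst_lt_snd : ∀ p ∈ τ, p.1 < p.2
  injOn_fst : Set.InjOn Prod.fst (τ : Set (ℕ × ℕ))
  injOn_snd : Set.InjOn Prod.snd (τ : Set (ℕ × ℕ))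
  noncrossing : ∀ p ∈ τ, ∀ q ∈ τ, ¬(p.1 < q.1 ∧ q.1 < p.2 ∧ p.2 < q.2)
  image_fst : τ.image Prod.fst = A
  image_snd : τ.image Prod.snd = B

namespace IsNoncrossingMatching

variable {A B : Finset ℕ} {τ : Finset (ℕ × ℕ)}

lemma fst_mem (h : IsNoncrossingMatching A B τ) {p : ℕ × ℕ} (hp : p ∈ τ) : p.1 ∈ A :=
  h.image_fst ▸ mem_image_of_mem _ hp

lemma snd_mem (h : IsNoncrossingMatching A B τ) {p : ℕ × ℕ} (hp : p ∈ τ) : p.2 ∈ B :=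
  h.image_snd ▸ mem_image_of_mem _ hp

lemma card_left (h : IsNoncrossingMatching A B τ) : #A = #τ := by
  rw [← h.image_fst, card_image_of_injOn h.injOn_fst]

lemma card_right (h : IsNoncrossingMatching A B τ) : #B = #τ := by
  rw [← h.image_snd, card_image_of_injOn h.injOn_snd]

lemma card_filter_lt_le (h : IsNoncrossingMatching A B τ) (x : ℕ) :
    #{b ∈ B | b < x} ≤ #{a ∈ A | a < x} := by
  rw [← h.image_fst, ← h.image_snd, card_filter_image_of_injOn h.injOn_fst,
    card_filter_image_of_injOn h.injOn_snd]
  exact card_le_card (monotone_filter_right _ fun p hp hpx => (h.fst_lt_snd p hp).trans hpx)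

lemma erase (h : IsNoncrossingMatching A B τ) {p : ℕ × ℕ} (hp : p ∈ τ) :
    IsNoncrossingMatching (A.erase p.1) (B.erase p.2) (τ.erase p) where
  fst_lt_snd q hq := h.fst_lt_snd q (mem_of_mem_erase hq)
  injOn_fst := h.injOn_fst.mono (coe_subset.2 (erase_subset _ _))
  injOn_snd := h.injOn_snd.mono (coe_subset.2 (erase_subset _ _))
  noncrossing q hq r hr := h.noncrossing q (mem_of_mem_erase hq) r (mem_of_mem_erase hr)
  image_fst := by rw [image_erase_of_injOn h.injOn_fst hp, h.image_fst]
  image_snd := by rw [image_erase_of_injOn h.injOn_snd hp, h.image_snd]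

lemma le_fst_of_forall_snd_le (h : IsNoncrossingMatching A B τ) {p : ℕ × ℕ} (hp : p ∈ τ)
    (hmin : ∀ b ∈ B, p.2 ≤ b) {a : ℕ} (ha : a ∈ A) (hap : a < p.2) : a ≤ p.1 := by
  obtain ⟨q, hq, rfl⟩ := mem_image.1 (h.image_fst ▸ ha)
  by_contra! hpq
  have hne : q ≠ p := by rintro rfl; exact lt_irrefl _ hpq
  have hsnd : p.2 < q.2 :=
    (hmin _ (h.snd_mem hq)).lt_of_ne fun he => hne (h.injOn_snd hq hp he.symm)
  exact h.noncrossing p hp q hq ⟨hpq, hap, hsnd⟩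

theorem unique {σ : Finset (ℕ × ℕ)}
    (hτ : IsNoncrossingMatching A B τ) (hσ : IsNoncrossingMatching A B σ) : τ = σ := by
  induction B using Finset.induction_on_min generalizing A τ σ with
  | empty => rw [image_eq_empty.1 hτ.image_snd, image_eq_empty.1 hσ.image_snd]
  | insert b B hb ih =>
    have hmin : ∀ c ∈ insert b B, b ≤ c := by
      simpa only [mem_insert, forall_eq_or_imp, le_refl, true_and] using fun c hc => (hb c hc).le
    obtain ⟨p, hp, hpb⟩ := mem_image.1 (hτ.image_snd ▸ mem_insert_self b B)
    obtain ⟨q, hq, hqb⟩ := mem_image.1 (hσ.image_snd ▸ mem_insert_self b B)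
    have hpq : p = q := by
      refine Prod.ext (le_antisymm ?_ ?_) (hpb.trans hqb.symm)
      · exact hσ.le_fst_of_forall_snd_le hq (hqb ▸ hmin) (hτ.fst_mem hp)
          (hqb ▸ hpb ▸ hτ.fst_lt_snd p hp)
      · exact hτ.le_fst_of_forall_snd_le hp (hpb ▸ hmin) (hσ.fst_mem hq)
          (hpb ▸ hqb ▸ hσ.fst_lt_snd q hq)
    subst hpq
    have hB : (insert b B).erase p.2 = B := by
      rw [hpb]
      exact erase_insert fun h => lt_irrefl b (hb b h)
    have hτ' := hτ.erase hp
    have hσ' := hσ.erase hq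
    rw [hB] at hτ' hσ'
    rw [← insert_erase hp, ← insert_erase hq, ih hτ' hσ']

lemma insert (h : IsNoncrossingMatching A B τ) {a b : ℕ} (hab : a < b) (ha : a ∉ A)
    (hb : b ∉ B)
    (hcross : ∀ q ∈ τ, ¬(a < q.1 ∧ q.1 < b ∧ b < q.2) ∧ ¬(q.1 < a ∧ a < q.2 ∧ q.2 < b)) :
    IsNoncrossingMatching (insert a A) (insert b B) (insert (a, b) τ) where
  fst_lt_snd := by
    simp only [mem_insert, forall_eq_or_imp]
    exact ⟨hab, h.fst_lt_snd⟩
  injOn_fst := by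
    rw [coe_insert, Set.injOn_insert fun hp => ha (h.fst_mem hp), ← coe_image, h.image_fst]
    exact ⟨h.injOn_fst, ha⟩
  injOn_snd := by
    rw [coe_insert, Set.injOn_insert fun hp => hb (h.snd_mem hp), ← coe_image, h.image_snd]
    exact ⟨h.injOn_snd, hb⟩
  noncrossing p hp q hq := by
    rcases mem_insert.1 hp with rfl | hp <;> rcases mem_insert.1 hq with rfl | hq
    · omega
    · exact (hcross q hq).1
    · exact (hcross p hp).2
    · exact h.noncrossing p hp q hq
  image_fst := by rw [image_insert, h.image_fst]
  image_snd := by rw [image_insert, h.image_snd]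

end IsNoncrossingMatching

lemma card_filter_lt_erase_le {A B : Finset ℕ} {a b : ℕ} (hb : ∀ c ∈ B, b < c)
    (haA : a ∈ A) (hab : a < b) (hdom : ∀ x, #{c ∈ insert b B | c < x} ≤ #{c ∈ A | c < x})
    (x : ℕ) : #{c ∈ B | c < x} ≤ #{c ∈ A.erase a | c < x} := by
  rcases le_or_gt x b with hxb | hbx
  · rw [filter_false_of_mem fun c hc => not_lt.2 (hxb.trans (hb c hc).le), card_empty]
    exact Nat.zero_le _
  · have := hdom x
    have hbB : b ∉ {c ∈ B | c < x} := fun h => lt_irrefl b (hb b (mem_filter.1 h).1)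
    rw [filter_insert, if_pos hbx, card_insert_of_notMem hbB] at this
    rw [filter_erase, card_erase_of_mem (mem_filter.2 ⟨haA, by omega⟩)]
    omega

theorem exists_isNoncrossingMatching {A B : Finset ℕ} (hAB : Disjoint A B) (hcard : #A = #B)
    (hdom : ∀ x, #{b ∈ B | b < x} ≤ #{a ∈ A | a < x}) : ∃ τ, IsNoncrossingMatching A B τ := by
  induction B using Finset.induction_on_min generalizing A with
  | empty =>
    rw [card_empty, card_eq_zero] at hcard
    subst hcard
    exact ⟨∅, by constructor <;> simp⟩
  | insert b B hb ih =>
    have hbB : b ∉ B := fun h => lt_irrefl b (hb b h)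
    have hbelow : {a ∈ A | a < b}.Nonempty := by
      have hpos : 0 < #{a ∈ A | a < b + 1} :=
        (card_pos.2 ⟨b, mem_filter.2 ⟨mem_insert_self b B, b.lt_succ_self⟩⟩).trans_le (hdom _)
      obtain ⟨a, ha⟩ := card_pos.1 hpos
      obtain ⟨haA, hab⟩ := mem_filter.1 ha
      have hne : a ≠ b := fun h => disjoint_left.1 hAB haA (h ▸ mem_insert_self b B)
      exact ⟨a, mem_filter.2 ⟨haA, lt_of_le_of_ne (Nat.lt_succ_iff.1 hab) hne⟩⟩
    set a := {a ∈ A | a < b}.max' hbelow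
    obtain ⟨haA, hab⟩ := mem_filter.1 (max'_mem _ hbelow)
    have hmax : ∀ c ∈ A, c < b → c ≤ a := fun c hc hcb => le_max' _ c (mem_filter.2 ⟨hc, hcb⟩)
    obtain ⟨τ, hτ⟩ := ih (A := A.erase a)
      ((hAB.mono_left (erase_subset a A)).mono_right (subset_insert b B))
      (by rw [card_erase_of_mem haA, hcard, card_insert_of_notMem hbB]; rfl)
      (card_filter_lt_erase_le hb haA hab hdom)
    refine ⟨insert (a, b) τ, ?_⟩
    rw [← insert_erase haA]
    refine hτ.insert hab (notMem_erase a A) hbB fun q hq => ?_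
    have hq1 := hmax q.1 (mem_of_mem_erase (hτ.fst_mem hq))
    have hq2 := hb q.2 (hτ.snd_mem hq)
    omega

lemma IsNoncrossingMatching.isPNP {k n : ℕ} {A B T : Finset ℕ} {τ : Finset (ℕ × ℕ)}
    (h : IsNoncrossingMatching A B τ) (hAB : Disjoint A B) (hTA : Disjoint T A)
    (hTB : Disjoint T B) (hA : A ⊆ Icc 1 n) (hB : B ⊆ Icc 1 n) (hT : T ⊆ Icc 1 n)
    (hk : #T + #A = k) : IsPNP k n τ T := by
  refine ⟨fun p hp => ⟨h.fst_lt_snd p hp, hA (h.fst_mem hp), hB (h.snd_mem hp)⟩, hT,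
    fun p hp q hq hne => ⟨fun he => hne (h.injOn_fst hp hq he), fun he => ?_, fun he => ?_,
      fun he => hne (h.injOn_snd hp hq he)⟩,
    fun p hp => ⟨disjoint_right.1 hTA (h.fst_mem hp), disjoint_right.1 hTB (h.snd_mem hp)⟩,
    h.noncrossing, h.card_left ▸ hk⟩
  · exact disjoint_left.1 hAB (h.fst_mem hp) (he ▸ h.snd_mem hq)
  · exact disjoint_left.1 hAB (h.fst_mem hq) (he ▸ h.snd_mem hp)

namespace IsPNP

variable {k n : ℕ} {τ : Finset (ℕ × ℕ)} {T : Finset ℕ}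

lemma isNoncrossingMatching (h : IsPNP k n τ T) :
    IsNoncrossingMatching (τ.image Prod.fst) (τ.image Prod.snd) τ where
  fst_lt_snd p hp := (h.1 p hp).1
  injOn_fst p hp q hq hpq := by_contra fun hne => (h.2.2.1 p hp q hq hne).1 hpq
  injOn_snd p hp q hq hpq := by_contra fun hne => (h.2.2.1 p hp q hq hne).2.2.2 hpq
  noncrossing := h.2.2.2.2.1
  image_fst := rfl
  image_snd := rfl

lemma disjoint_image_fst_snd (h : IsPNP k n τ T) :
    Disjoint (τ.image Prod.fst) (τ.image Prod.snd) := by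
  simp only [disjoint_left, mem_image, not_exists, not_and, forall_exists_index, and_imp]
  rintro _ p hp rfl q hq hqp
  obtain rfl | hne := eq_or_ne p q
  · exact (h.1 p hp).1.ne' hqp
  · exact (h.2.2.1 p hp q hq hne).2.1 hqp.symm

lemma disjoint_image_fst (h : IsPNP k n τ T) : Disjoint T (τ.image Prod.fst) := by
  simp only [disjoint_right, mem_image, forall_exists_index, and_imp]
  rintro _ p hp rfl
  exact (h.2.2.2.1 p hp).1

lemma disjoint_image_snd (h : IsPNP k n τ T) : Disjoint T (τ.image Prod.snd) := by
  simp only [disjoint_right, mem_image, forall_exists_index, and_imp]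
  rintro _ p hp rfl
  exact (h.2.2.2.1 p hp).2

lemma theta_inter (h : IsPNP k n τ T) : (theta τ T).1 ∩ (theta τ T).2 = T := by
  rw [theta, ← union_inter_distrib_left, disjoint_iff_inter_eq_empty.1 h.disjoint_image_fst_snd,
    union_empty]

lemma isStandardPair_theta (h : IsPNP k n τ T) :
    IsStandardPair k n (theta τ T).1 (theta τ T).2 := by
  have hτ := h.isNoncrossingMatching
  refine isStandardPair_iff.2 ⟨?_, ?_, union_subset h.2.1 ?_, union_subset h.2.1 ?_, fun x => ?_⟩
  · rw [theta, card_union_of_disjoint h.disjoint_image_fst, hτ.card_left, h.2.2.2.2.2]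
  · rw [theta, card_union_of_disjoint h.disjoint_image_snd, hτ.card_right, h.2.2.2.2.2]
  · exact image_subset_iff.2 fun p hp => (h.1 p hp).2.1
  · exact image_subset_iff.2 fun p hp => (h.1 p hp).2.2
  · rw [theta, card_filter_union_of_disjoint h.disjoint_image_fst,
      card_filter_union_of_disjoint h.disjoint_image_snd]
    exact Nat.add_le_add_left (hτ.card_filter_lt_le x) _

end IsPNP

lemma theta_injOn (k n : ℕ) :
    Set.InjOn (fun p : Finset (ℕ × ℕ) × Finset ℕ => theta p.1 p.2) {p | IsPNP k n p.1 p.2} := by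
  rintro ⟨τ, T⟩ (hτ : IsPNP k n τ T) ⟨σ, U⟩ (hσ : IsPNP k n σ U) (he : theta τ T = theta σ U)
  obtain rfl : T = U := by rw [← hτ.theta_inter, ← hσ.theta_inter, he]
  have hfst : τ.image Prod.fst = σ.image Prod.fst := by
    rw [← union_sdiff_cancel_left hτ.disjoint_image_fst,
      ← union_sdiff_cancel_left hσ.disjoint_image_fst]
    exact congrArg (· \ T) (congrArg Prod.fst he)
  have hsnd : τ.image Prod.snd = σ.image Prod.snd := by
    rw [← union_sdiff_cancel_left hτ.disjoint_image_snd,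
      ← union_sdiff_cancel_left hσ.disjoint_image_snd]
    exact congrArg (· \ T) (congrArg Prod.snd he)
  have hσ' := hσ.isNoncrossingMatching
  rw [← hfst, ← hsnd] at hσ'
  rw [hτ.isNoncrossingMatching.unique hσ']

lemma IsStandardPair.exists_matching {k n : ℕ} {I J : Finset ℕ} (h : IsStandardPair k n I J) :
    ∃ τ, Matching k n I J τ := by
  obtain ⟨hI, hJ, hIn, hJn, hdom⟩ := isStandardPair_iff.1 h
  have hdom' (x : ℕ) : #{j ∈ J \ I | j < x} ≤ #{i ∈ I \ J | i < x} := by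
    have hIx := card_filter_sdiff_add_card_filter_inter I J (· < x)
    have hJx := card_filter_sdiff_add_card_filter_inter J I (· < x)
    rw [inter_comm] at hJx
    have := hdom x
    omega
  obtain ⟨τ, hτ⟩ := exists_isNoncrossingMatching (sdiff_disjoint.mono_right sdiff_subset)
    (card_sdiff_comm (hI.trans hJ.symm)) hdom'
  refine ⟨τ, hτ.isPNP (sdiff_disjoint.mono_right sdiff_subset)
    (disjoint_sdiff.mono_left inter_subset_right) (disjoint_sdiff.mono_left inter_subset_left)
    (sdiff_subset.trans hIn) (sdiff_subset.trans hJn) (inter_subset_left.trans hIn)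
    (by rw [card_inter_add_card_sdiff, hI]), ?_, ?_⟩
  · rw [hτ.image_fst, union_comm, sdiff_union_inter]
  · rw [hτ.image_snd, inter_comm, union_comm, sdiff_union_inter]

/-- `θ` maps each `(k,n)`-partial noncrossing pairing `(τ,T)` to a standard pair
`(I₁,I₂)` with `I₁ ∩ I₂ = T`, and is a bijection from `(k,n)`-partial noncrossing
pairings to standard pairs (i.e. to semistandard tableaux of shape `2^k` with entries
in `{1,…,n}`, recorded by their two columns). -/
theorem stmt_4 (k n : ℕ) :
    (∀ τ T, IsPNP k n τ T →
      IsStandardPair k n (theta τ T).1 (theta τ T).2 ∧ (theta τ T).1 ∩ (theta τ T).2 = T) ∧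
    Set.BijOn (fun p : Finset (ℕ × ℕ) × Finset ℕ => theta p.1 p.2)
      {p | IsPNP k n p.1 p.2} {q | IsStandardPair k n q.1 q.2} := by
  refine ⟨fun τ T h => ⟨h.isStandardPair_theta, h.theta_inter⟩,
    fun _ h => IsPNP.isStandardPair_theta h, theta_injOn k n, ?_⟩
  rintro ⟨I, J⟩ (hIJ : IsStandardPair k n I J)
  obtain ⟨τ, hτ, hI, hJ⟩ := hIJ.exists_matching
  exact ⟨(τ, I ∩ J), hτ, Prod.ext hI hJ⟩
end

section
/- For d = 1, identifying one-column tableaux of shape 1^k with k-subsets of [n], the cyclic Demazure crystal B_f(ω_k) equals the positroid M(f) = ⋂_{a=1}^n χ^{a-1}(M_{χ^{1-a}(I_a)}), where M_I = { J : J ≥ I in the componentwise (Gale/Bruhat) order } is the Schubert matroid. -/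
/-- A cell `(r,c)` of a tableau with `k` rows is *free* for the Bender–Knuth toggle `t_i`:
an entry `i` is free if the cell directly below does not contain `i+1`, and an entry
`i+1` is free if the cell directly above does not contain `i`. -/
def bkFree (k i : ℕ) (T : ℕ → ℕ → ℕ) (r c : ℕ) : Prop :=
  (T r c = i ∧ (r + 1 = k ∨ T (r + 1) c ≠ i + 1)) ∨
  (T r c = i + 1 ∧ (r = 0 ∨ T (r - 1) c ≠ i))

open Classical in
/-- The Bender–Knuth involution `t_i` on (the rectangle `k × d` of) a tableau: in each
row, if the free entries consist of `a` letters `i` followed by `b` letters `i+1`,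
replace them by `b` letters `i` followed by `a` letters `i+1`. -/
noncomputable def bk (k d i : ℕ) (T : ℕ → ℕ → ℕ) : ℕ → ℕ → ℕ := fun r c =>
  let F := (Finset.range d).filter fun c' => bkFree k i T r c'
  if c ∈ F then
    if (F.filter fun c' => c' < c).card < (F.filter fun c' => T r c' = i + 1).card
    then i else i + 1
  else T r c

/-- Promotion `χ` on semistandard tableaux with entries in `{1,…,n}`, computed as the
composite of Bender–Knuth involutions `t_1 ∘ t_2 ∘ ⋯ ∘ t_{n-1}`.  This is the standard
equivalent description of jeu-de-taquin promotion (delete the `n`'s, slide the remaining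
entries to the bottom right, add one to every entry, fill the vacated boxes with `1`'s). -/
noncomputable def promo (k d n : ℕ) (T : ℕ → ℕ → ℕ) : ℕ → ℕ → ℕ :=
  (((List.range (n - 1)).map (· + 1)).foldr (fun i acc => bk k d i acc) T)

/-- Normalization of a tableau: set all values outside the `k × d` rectangle to `0`. -/
def normTab (k d : ℕ) (T : ℕ → ℕ → ℕ) : ℕ → ℕ → ℕ := fun r c =>
  if r < k ∧ c < d then T r c else 0

/-- Promotion followed by normalization outside the rectangle. -/
noncomputable def promoN (k d n : ℕ) : (ℕ → ℕ → ℕ) → (ℕ → ℕ → ℕ) := fun T =>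
  normTab k d (promo k d n T)

/-- The cyclic rotation `χ` on subsets of `{1,…,n}`: add `1` mod `n` to each element. -/
def shiftSet (n : ℕ) (S : Finset ℕ) : Finset ℕ := S.image fun x => x % n + 1

/-- The tableau `T_I` of shape `d^k` whose `r`-th row is filled with the `r`-th smallest
element of `I` (normalized to `0` outside the rectangle). -/
def tabOf (k d : ℕ) (I : Finset ℕ) : ℕ → ℕ → ℕ := fun r c =>
  if r < k ∧ c < d then (I.sort (· ≤ ·)).getD r 0 else 0

/-- The Demazure crystal `B_I(dω_k)`: normalized semistandard tableaux of shape `d^k`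
with entries in `{1,…,n}` which are entry-wise `≥ T_I`. -/
def BIset (k d n : ℕ) (I : Finset ℕ) : Set (ℕ → ℕ → ℕ) :=
  {T | IsSSYT k d n T ∧ (∀ r c, r < k → c < d → tabOf k d I r c ≤ T r c) ∧
    ∀ r c, ¬(r < k ∧ c < d) → T r c = 0}

/-- The cyclic Demazure crystal
`B_f(dω_k) = ⋂_{a=1}^n χ^{a-1}(B_{χ^{1-a}(I_a)}(dω_k))`, where `(I_1,…,I_n)` is the
Grassmann necklace of `f`, `χ` acts on tableaux by promotion and on subsets by cyclic
rotation (and `χ^{1-a} = χ^{n+1-a}`). -/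
noncomputable def cyclicDemazure (k d n : ℕ) (f : ℤ → ℤ) : Set (ℕ → ℕ → ℕ) :=
  ⋂ a ∈ Finset.Icc 1 n, (promoN k d n)^[a - 1] ''
    BIset k d n ((shiftSet n)^[n + 1 - a] (necklaceOf n f a))

/-- Componentwise (Gale) order on `k`-subsets: the `r`-th smallest element of `I` is at
most the `r`-th smallest element of `J` for all `r < k`. -/
def GaleLe (k : ℕ) (I J : Finset ℕ) : Prop :=
  ∀ r, r < k → (I.sort (· ≤ ·)).getD r 0 ≤ (J.sort (· ≤ ·)).getD r 0

/-- The Schubert matroid `M_I = { J : J ≥ I componentwise }` on `k`-subsets of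
`{1,…,n}`. -/
def SchubMatroid (k n : ℕ) (I : Finset ℕ) : Set (Finset ℕ) :=
  {J | J ⊆ Finset.Icc 1 n ∧ J.card = k ∧ GaleLe k I J}

/-- The positroid `M(f) = ⋂_{a=1}^n χ^{a-1}(M_{χ^{1-a}(I_a)})` of a bounded affine
permutation `f` with Grassmann necklace `(I_1,…,I_n)`. -/
def posOf (k n : ℕ) (f : ℤ → ℤ) : Set (Finset ℕ) :=
  ⋂ a ∈ Finset.Icc 1 n, (shiftSet n)^[a - 1] ''
    SchubMatroid k n ((shiftSet n)^[n + 1 - a] (necklaceOf n f a))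

/-!
A one-column tableau of shape `1^k` with entries in `[n]` is the same thing as the `k`-subset of
its entries, and under this identification `B_I(ω_k)` is exactly the Schubert matroid `M_I`.
On a single column the Bender–Knuth involution `t_i` acts on the set of entries as the
transposition `(i i+1)`: an `i` is blocked precisely when `i + 1` is present as well (and then
the transposition fixes the set), and symmetrically for `i + 1`. Promotion `t_1 ∘ ⋯ ∘ t_{n-1}`
therefore acts as the cycle `(1 2 ⋯ n)`, which is `χ`, so the intersections defining `B_f(ω_k)`
and `M(f)` correspond term by term. Reading off the column is injective on `k`-subsets, hence
commutes with the intersection.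
-/

open Finset

theorem Finset.sort_image_of_strictMonoOn {α β : Type*} [LinearOrder α] [LinearOrder β]
    {f : α → β} {s : Finset α} (hf : StrictMonoOn f s) :
    (s.image f).sort (· ≤ ·) = (s.sort (· ≤ ·)).map f := by
  have hsorted : ((s.sort (· ≤ ·)).map f).Pairwise (· < ·) :=
    List.pairwise_map.mpr <| (s.sortedLT_sort.pairwise).imp_of_mem fun ha hb hab =>
      hf (mem_sort _ |>.mp ha) (mem_sort _ |>.mp hb) hab
  rw [← (List.toFinset_sort _ hsorted.nodup).mpr (hsorted.imp le_of_lt)]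
  congr 1
  ext
  simp

theorem Finset.image_swap_of_mem {α : Type*} [DecidableEq α] {s : Finset α} {a b : α}
    (ha : a ∈ s) (hb : b ∈ s) : s.image (Equiv.swap a b) = s := by
  refine eq_of_subset_of_card_le (fun y hy => ?_)
    (card_image_of_injective _ (Equiv.injective _)).ge
  obtain ⟨x, hx, rfl⟩ := mem_image.mp hy
  rw [Equiv.swap_apply_def]
  split_ifs <;> assumption

namespace OneColumn

/-- The `r`-th smallest element of `S` (`0` if `#S ≤ r`): the entry in row `r` of
`tabOf k 1 S`. -/
def nthSmallest (S : Finset ℕ) (r : ℕ) : ℕ := (S.sort (· ≤ ·)).getD r 0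

variable {k n : ℕ} {S : Finset ℕ}

theorem nthSmallest_eq_getElem (h : S.card = k) {r : ℕ} (hr : r < k) :
    nthSmallest S r = (S.sort (· ≤ ·))[r]'(by rwa [length_sort, h]) :=
  List.getD_eq_getElem _ _ _

theorem nthSmallest_mem (h : S.card = k) {r : ℕ} (hr : r < k) : nthSmallest S r ∈ S := by
  rw [nthSmallest_eq_getElem h hr, ← mem_sort (· ≤ ·)]
  exact List.getElem_mem _

theorem nthSmallest_strictMonoOn (h : S.card = k) :
    StrictMonoOn (nthSmallest S) (Set.Iio k) := fun _ hr _ hr' hrr' => by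
  rw [nthSmallest_eq_getElem h hr, nthSmallest_eq_getElem h hr']
  exact S.sortedLT_sort.strictMono_get hrr'

theorem exists_nthSmallest_eq (h : S.card = k) {x : ℕ} (hx : x ∈ S) :
    ∃ r < k, nthSmallest S r = x := by
  obtain ⟨r, hr, rfl⟩ := List.getElem_of_mem ((mem_sort (· ≤ ·)).mpr hx)
  rw [length_sort, h] at hr
  exact ⟨r, hr, nthSmallest_eq_getElem h hr⟩

theorem eq_succ_of_nthSmallest_eq_succ (h : S.card = k) {r r' : ℕ} (hr : r < k)
    (hr' : r' < k) (he : nthSmallest S r' = nthSmallest S r + 1) : r' = r + 1 := by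
  have hmono := nthSmallest_strictMonoOn h
  have hlt : r < r' := (hmono.lt_iff_lt hr hr').mp (by omega)
  by_contra hne
  have := hmono hr (show r + 1 < k by omega) (Nat.lt_succ_self r)
  have := hmono (show r + 1 < k by omega) hr' (show r + 1 < r' by omega)
  omega

theorem nthSmallest_image {f : ℕ → ℕ} (hf : StrictMonoOn f S) (h : S.card = k) {r : ℕ}
    (hr : r < k) : nthSmallest (S.image f) r = f (nthSmallest S r) := by
  rw [nthSmallest, sort_image_of_strictMonoOn hf, nthSmallest_eq_getElem h hr,
    List.getD_eq_getElem _ _ (by simpa [h] using hr), List.getElem_map]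

theorem nthSmallest_image_range {v : ℕ → ℕ} (hv : StrictMonoOn v (Set.Iio k)) {r : ℕ}
    (hr : r < k) : nthSmallest ((range k).image v) r = v r := by
  rw [nthSmallest_image (by rwa [coe_range]) (card_range k) hr]
  simp [nthSmallest, hr]

theorem tabOf_one_zero (k : ℕ) (S : Finset ℕ) (r : ℕ) :
    tabOf k 1 S r 0 = if r < k then nthSmallest S r else 0 := by
  simp [tabOf, nthSmallest]

theorem tabOf_one_succ (k : ℕ) (S : Finset ℕ) (r c : ℕ) : tabOf k 1 S r (c + 1) = 0 := by
  simp [tabOf]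

theorem image_range_tabOf (h : S.card = k) :
    (range k).image (fun r => tabOf k 1 S r 0) = S := by
  ext x
  simp only [mem_image, mem_range, tabOf_one_zero]
  constructor
  · rintro ⟨r, hr, rfl⟩
    rw [if_pos hr]
    exact nthSmallest_mem h hr
  · intro hx
    obtain ⟨r, hr, rfl⟩ := exists_nthSmallest_eq h hx
    exact ⟨r, hr, if_pos hr⟩

theorem tabOf_mem_BIset {I J : Finset ℕ} (hJ : J ∈ SchubMatroid k n I) :
    tabOf k 1 J ∈ BIset k 1 n I := by
  obtain ⟨hsub, hcard, hgale⟩ := hJ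
  refine ⟨⟨fun r c hr hc => ?_, fun r c _ hc => by omega, fun r c hr hc => ?_⟩,
    fun r c hr hc => ?_, fun r c hrc => if_neg hrc⟩
  · obtain rfl : c = 0 := by omega
    rw [tabOf_one_zero, if_pos hr]
    exact mem_Icc.mp (hsub (nthSmallest_mem hcard hr))
  · obtain rfl : c = 0 := by omega
    rw [tabOf_one_zero, tabOf_one_zero, if_pos (by omega), if_pos hr]
    exact nthSmallest_strictMonoOn hcard (by simp; omega) (Set.mem_Iio.mpr hr) (by omega)
  · obtain rfl : c = 0 := by omega
    rw [tabOf_one_zero, tabOf_one_zero, if_pos hr, if_pos hr]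
    exact hgale r hr

theorem exists_tabOf_eq_of_mem_BIset {I : Finset ℕ} {T : ℕ → ℕ → ℕ}
    (hT : T ∈ BIset k 1 n I) : ∃ J ∈ SchubMatroid k n I, tabOf k 1 J = T := by
  obtain ⟨⟨hbound, -, hcol⟩, hge, hzero⟩ := hT
  have hv : StrictMonoOn (fun r => T r 0) (Set.Iio k) :=
    strictMonoOn_of_lt_succ Set.ordConnected_Iio fun r _ _ hr1 =>
      hcol r 0 (by simpa [Order.succ_eq_add_one] using hr1) one_pos
  refine ⟨(range k).image (fun r => T r 0),
    ⟨fun x hx => ?_, ?_, fun r hr => ?_⟩, funext fun r => funext fun c => ?_⟩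
  · obtain ⟨r, hr, rfl⟩ := mem_image.mp hx
    exact mem_Icc.mpr (hbound r 0 (mem_range.mp hr) one_pos)
  · exact (card_image_of_injOn (by rw [coe_range]; exact hv.injOn)).trans (card_range k)
  · show nthSmallest I r ≤ nthSmallest _ r
    rw [nthSmallest_image_range hv hr]
    simpa [tabOf_one_zero, hr] using hge r 0 hr one_pos
  · rcases c with _ | c
    · rw [tabOf_one_zero]
      split_ifs with hr
      · exact nthSmallest_image_range hv hr
      · exact (hzero r 0 fun h => hr h.1).symm
    · rw [tabOf_one_succ, hzero r (c + 1) (by omega)]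

theorem BIset_one_eq_image (I : Finset ℕ) :
    BIset k 1 n I = tabOf k 1 '' SchubMatroid k n I :=
  Set.Subset.antisymm (fun _ hT => exists_tabOf_eq_of_mem_BIset hT)
    (Set.image_subset_iff.mpr fun _ => tabOf_mem_BIset)

theorem bk_one_succ (k i : ℕ) (T : ℕ → ℕ → ℕ) (r c : ℕ) :
    bk k 1 i T r (c + 1) = T r (c + 1) := by
  simp [bk]

theorem bk_one_zero_of_bkFree {i : ℕ} {T : ℕ → ℕ → ℕ} {r : ℕ} (hfree : bkFree k i T r 0) :
    bk k 1 i T r 0 = Equiv.swap i (i + 1) (T r 0) := by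
  have hval : T r 0 = i ∨ T r 0 = i + 1 := by unfold bkFree at hfree; tauto
  rcases hval with hv | hv <;> simp [bk, hfree, hv, Finset.filter_singleton]

theorem bk_one_zero_of_not_bkFree {i : ℕ} {T : ℕ → ℕ → ℕ} {r : ℕ}
    (hfree : ¬bkFree k i T r 0) : bk k 1 i T r 0 = T r 0 := by
  simp [bk, hfree]

/-- In a column, an `i` can only be blocked by an `i + 1` in the next row and an `i + 1` only by
an `i` in the previous row, so whether a cell is free depends only on the set of entries. -/
theorem bkFree_tabOf_iff (h : S.card = k) {i r : ℕ} (hr : r < k) :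
    bkFree k i (tabOf k 1 S) r 0 ↔
      (nthSmallest S r = i ∨ nthSmallest S r = i + 1) ∧ ¬(i ∈ S ∧ i + 1 ∈ S) := by
  simp only [bkFree, tabOf_one_zero, if_pos hr]
  constructor
  · rintro (⟨hi, hnext⟩ | ⟨hi, hprev⟩)
    · refine ⟨Or.inl hi, fun ⟨_, hi1⟩ => ?_⟩
      obtain ⟨r', hr', he⟩ := exists_nthSmallest_eq h hi1
      obtain rfl := eq_succ_of_nthSmallest_eq_succ h hr hr' (by omega)
      rcases hnext with hk | hne
      · omega
      · simp [hr', he] at hne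
    · refine ⟨Or.inr hi, fun ⟨hi0, _⟩ => ?_⟩
      obtain ⟨r', hr', he⟩ := exists_nthSmallest_eq h hi0
      obtain rfl := eq_succ_of_nthSmallest_eq_succ h hr' hr (by omega)
      simp [hr', he] at hprev
  · rintro ⟨hi | hi, hnot⟩
    · refine Or.inl ⟨hi, ?_⟩
      have hi1 : i + 1 ∉ S := fun hi1 => hnot ⟨hi ▸ nthSmallest_mem h hr, hi1⟩
      by_cases hr1 : r + 1 < k
      · exact Or.inr (by rw [if_pos hr1]; exact fun he => hi1 (he ▸ nthSmallest_mem h hr1))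
      · exact Or.inl (by omega)
    · refine Or.inr ⟨hi, ?_⟩
      have hi0 : i ∉ S := fun hi0 => hnot ⟨hi0, hi ▸ nthSmallest_mem h hr⟩
      rcases Nat.eq_zero_or_pos r with hr0 | hr0
      · exact Or.inl hr0
      · exact Or.inr (by
          rw [if_pos (by omega)]; exact fun he => hi0 (he ▸ nthSmallest_mem h (by omega)))

theorem strictMonoOn_swap {i : ℕ} (hnot : ¬(i ∈ S ∧ i + 1 ∈ S)) :
    StrictMonoOn (Equiv.swap i (i + 1)) S := by
  intro a ha b hb hab
  have : ¬(a = i ∧ b = i + 1) := fun ⟨hai, hbi⟩ => hnot ⟨hai ▸ ha, hbi ▸ hb⟩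
  simp only [Equiv.swap_apply_def]
  split_ifs <;> omega

theorem bk_tabOf (h : S.card = k) {i : ℕ} (hi : 1 ≤ i) :
    bk k 1 i (tabOf k 1 S) = tabOf k 1 (S.image (Equiv.swap i (i + 1))) := by
  funext r c
  rcases c with _ | c
  swap
  · rw [bk_one_succ, tabOf_one_succ, tabOf_one_succ]
  by_cases hr : r < k
  swap
  · have hnf : ¬bkFree k i (tabOf k 1 S) r 0 := by
      simp only [bkFree, tabOf_one_zero, if_neg hr]; omega
    rw [bk_one_zero_of_not_bkFree hnf, tabOf_one_zero, tabOf_one_zero, if_neg hr, if_neg hr]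
  by_cases hboth : i ∈ S ∧ i + 1 ∈ S
  · have hnf : ¬bkFree k i (tabOf k 1 S) r 0 := by
      rw [bkFree_tabOf_iff h hr]; exact fun h => h.2 hboth
    rw [bk_one_zero_of_not_bkFree hnf, image_swap_of_mem hboth.1 hboth.2]
  rw [tabOf_one_zero, if_pos hr, nthSmallest_image (strictMonoOn_swap hboth) h hr]
  by_cases hfree : bkFree k i (tabOf k 1 S) r 0
  · rw [bk_one_zero_of_bkFree hfree, tabOf_one_zero, if_pos hr]
  · rw [bk_one_zero_of_not_bkFree hfree, tabOf_one_zero, if_pos hr]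
    rw [bkFree_tabOf_iff h hr] at hfree
    have : ¬(nthSmallest S r = i ∨ nthSmallest S r = i + 1) := fun h => hfree ⟨h, hboth⟩
    rw [Equiv.swap_apply_of_ne_of_ne] <;> omega

theorem foldr_bk_tabOf (h : S.card = k) {L : List ℕ} (hL : ∀ i ∈ L, 1 ≤ i) :
    L.foldr (fun i T => bk k 1 i T) (tabOf k 1 S)
      = tabOf k 1 (S.image ⇑(L.map fun i => Equiv.swap i (i + 1)).prod) := by
  induction L with
  | nil => simp
  | cons i L ih =>
    have hcard : (S.image ⇑(L.map fun i => Equiv.swap i (i + 1)).prod).card = k := by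
      rw [card_image_of_injective _ (Equiv.injective _), h]
    rw [List.foldr_cons, ih fun j hj => hL j (List.mem_cons_of_mem i hj),
      bk_tabOf hcard (hL i List.mem_cons_self), image_image]
    rfl

def rotation (n : ℕ) : Equiv.Perm ℕ := (List.range' 1 n).formPerm

theorem prod_swap_range' (s m : ℕ) :
    ((List.range' s m).map fun i => Equiv.swap i (i + 1)).prod
      = (List.range' s (m + 1)).formPerm := by
  induction m generalizing s with
  | zero => simp
  | succ m ih =>
    rw [List.range'_succ, List.map_cons, List.prod_cons, ih]
    conv_rhs => rw [List.range'_succ, List.range'_succ]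
    conv_lhs => rw [List.range'_succ]
    rw [List.formPerm_cons_cons]

theorem rotation_apply {y : ℕ} (hy : y ∈ Icc 1 n) : rotation n y = y % n + 1 := by
  obtain ⟨hy1, hyn⟩ := mem_Icc.mp hy
  have hlen : y - 1 < (List.range' 1 n).length := by simp; omega
  have := List.formPerm_apply_getElem _ (List.nodup_range' ..) (y - 1) hlen
  simp only [List.getElem_range', List.length_range', one_mul] at this
  rw [show 1 + (y - 1) = y by omega, show y - 1 + 1 = y by omega] at this
  rw [rotation, this]
  omega

theorem shiftSet_eq_image_rotation (hS : S ⊆ Icc 1 n) : shiftSet n S = S.image (rotation n) :=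
  image_congr fun _ hy => (rotation_apply (hS hy)).symm

theorem normTab_tabOf (k d : ℕ) (S : Finset ℕ) : normTab k d (tabOf k d S) = tabOf k d S := by
  funext r c
  simp only [normTab, tabOf]
  split_ifs <;> rfl

/-- On a column, `t_1 ∘ ⋯ ∘ t_{n-1}` acts through `(1 2) ⋯ (n-1 n) = (1 2 ⋯ n)`. -/
theorem promoN_tabOf (hS : S ⊆ Icc 1 n) (h : S.card = k) :
    promoN k 1 n (tabOf k 1 S) = tabOf k 1 (shiftSet n S) := by
  have hlist : (List.range (n - 1)).map (· + 1) = List.range' 1 (n - 1) := by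
    rw [List.range'_eq_map_range]
    exact List.map_congr_left fun i _ => Nat.add_comm i 1
  rw [promoN, promo, hlist, foldr_bk_tabOf h fun i hi => (List.mem_range'_1.mp hi).1,
    normTab_tabOf, prod_swap_range', shiftSet_eq_image_rotation hS]
  rcases Nat.eq_zero_or_pos n with rfl | hn
  · rfl
  · rw [Nat.sub_add_cancel hn, rotation]

theorem mapsTo_shiftSet :
    Set.MapsTo (shiftSet n) {S | S ⊆ Icc 1 n ∧ S.card = k} {S | S ⊆ Icc 1 n ∧ S.card = k} := by
  rintro S ⟨hS, h⟩
  rw [shiftSet_eq_image_rotation hS]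
  refine ⟨fun x hx => ?_, (card_image_of_injective _ (Equiv.injective _)).trans h⟩
  obtain ⟨y, hy, rfl⟩ := mem_image.mp hx
  have hy' := mem_Icc.mp (hS hy)
  rw [rotation_apply (hS hy), mem_Icc]
  have := Nat.mod_lt y (show 0 < n by omega)
  omega

theorem iterate_promoN_tabOf (m : ℕ) (hS : S ⊆ Icc 1 n) (h : S.card = k) :
    (promoN k 1 n)^[m] (tabOf k 1 S) = tabOf k 1 ((shiftSet n)^[m] S) := by
  induction m generalizing S with
  | zero => rfl
  | succ m ih =>
    obtain ⟨hS', h'⟩ := mapsTo_shiftSet (k := k) ⟨hS, h⟩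
    rw [Function.iterate_succ_apply, Function.iterate_succ_apply, promoN_tabOf hS h, ih hS' h']

theorem image_iterate_promoN_BIset (m : ℕ) (I : Finset ℕ) :
    (promoN k 1 n)^[m] '' BIset k 1 n I
      = tabOf k 1 '' ((shiftSet n)^[m] '' SchubMatroid k n I) := by
  rw [BIset_one_eq_image, Set.image_image, Set.image_image]
  exact Set.image_congr fun J hJ => iterate_promoN_tabOf m hJ.1 hJ.2.1

theorem image_iterate_shiftSet_SchubMatroid_subset (m : ℕ) (I : Finset ℕ) :
    (shiftSet n)^[m] '' SchubMatroid k n I ⊆ {S | S.card = k} := by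
  rintro _ ⟨J, hJ, rfl⟩
  exact (mapsTo_shiftSet.iterate m ⟨hJ.1, hJ.2.1⟩).2

end OneColumn

theorem stmt_11_general (k n : ℕ) (hn : 0 < n) (f : ℤ → ℤ) :
    (fun T : ℕ → ℕ → ℕ => (Finset.range k).image fun r => T r 0) ''
      cyclicDemazure k 1 n f = posOf k n f := by
  set X : ℕ → Set (Finset ℕ) := fun a =>
    (shiftSet n)^[a - 1] '' SchubMatroid k n ((shiftSet n)^[n + 1 - a] (necklaceOf n f a))
  have hX : ∀ a, X a ⊆ {S | S.card = k} := fun a =>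
    OneColumn.image_iterate_shiftSet_SchubMatroid_subset _ _
  have hinv : Set.LeftInvOn (fun T : ℕ → ℕ → ℕ => (Finset.range k).image fun r => T r 0)
      (tabOf k 1) {S | S.card = k} := fun _ hS => OneColumn.image_range_tabOf hS
  have h1 : 1 ∈ Finset.Icc 1 n := Finset.mem_Icc.mpr ⟨le_rfl, hn⟩
  have hCD : cyclicDemazure k 1 n f = tabOf k 1 '' ⋂ a ∈ Finset.Icc 1 n, X a := by
    rw [(hinv.injOn.mono (Set.iUnion₂_subset fun a _ => hX a)).image_biInter_eq ⟨1, h1⟩]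
    exact Set.iInter₂_congr fun a _ => OneColumn.image_iterate_promoN_BIset _ _
  rw [hCD, hinv.image_image' ((Set.iInter₂_subset 1 h1).trans (hX 1))]
  rfl

/-- For `d = 1`, identifying a one-column tableau of shape `1^k` with the `k`-subset of
its entries, the cyclic Demazure crystal `B_f(ω_k)` equals the positroid `M(f)`. -/
theorem stmt_11 (k n : ℕ) (hn : 0 < n) (f : ℤ → ℤ) (hf : IsBAP k n f) :
    (fun T : ℕ → ℕ → ℕ => (Finset.range k).image fun r => T r 0) ''
      cyclicDemazure k 1 n f = posOf k n f :=
  stmt_11_general k n hn f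
end
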